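/- arXiv:1602.03124 — 10 statements merged into one kernel-verified Lean document; each statement's English description precedes it below -/
import Mathlib

section
/- Let I be a Boolean edge CSP instance all of whose constraint relations are even Δ-matroids. If f and g are two valid edge labelings of I, then the number of variables that are inconsistent in f is congruent modulo 2 to the number of variables that are inconsistent in g. -/
/-- Flip the values of a Boolean tuple on a finite set of coordinates. -/
def flipS {V : Type*} [DecidableEq V] (α : V → Bool) (S : Finset V) : V → Bool :=
  fun v => if v ∈ S then !(α v) else α v

/-- `M` is a Δ-matroid. -/
def IsDeltaMatroid {V : Type*} [DecidableEq V] (M : Set (V → Bool)) : Prop :=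
  M.Nonempty ∧ ∀ α ∈ M, ∀ β ∈ M, ∀ v, α v ≠ β v →
    ∃ u, α u ≠ β u ∧ flipS α {u, v} ∈ M

/-- Number of ones in a Boolean tuple. -/
def numOnes {V : Type*} [Fintype V] (α : V → Bool) : ℕ :=
  (Finset.univ.filter fun v => α v = true).card

/-- `M` is an even Δ-matroid. -/
def IsEvenDeltaMatroid {V : Type*} [Fintype V] [DecidableEq V] (M : Set (V → Bool)) : Prop :=
  IsDeltaMatroid M ∧ ∀ α ∈ M, ∀ β ∈ M, numOnes α % 2 = numOnes β % 2

/-- A Boolean edge CSP instance: variables `V`, constraints `C`, each constraint has a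
scope and a constraint relation on its scope, and every variable lies in the scope of
exactly two constraints. -/
structure EdgeCSP (V C : Type) [Fintype V] [DecidableEq V] [Fintype C] where
  scope : C → Finset V
  rel : ∀ c : C, Set ({v : V // v ∈ scope c} → Bool)
  twoOcc : ∀ v : V, (Finset.univ.filter fun c => v ∈ scope c).card = 2

/-- An edge labeling of an edge CSP instance: a Boolean value for each incidence pair. -/
def EdgeCSP.Labeling {V C : Type} [Fintype V] [DecidableEq V] [Fintype C]
    (I : EdgeCSP V C) : Type :=
  ∀ c : C, {v : V // v ∈ I.scope c} → Bool

/-- A labeling is valid if each constraint is satisfied. -/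
def EdgeCSP.Valid {V C : Type} [Fintype V] [DecidableEq V] [Fintype C]
    (I : EdgeCSP V C) (f : I.Labeling) : Prop :=
  ∀ c : C, f c ∈ I.rel c

/-- A variable is inconsistent in `f` if its two labels disagree. -/
def EdgeCSP.Inconsistent {V C : Type} [Fintype V] [DecidableEq V] [Fintype C]
    (I : EdgeCSP V C) (f : I.Labeling) (v : V) : Prop :=
  ∃ (c₁ c₂ : C) (h₁ : v ∈ I.scope c₁) (h₂ : v ∈ I.scope c₂),
    c₁ ≠ c₂ ∧ f c₁ ⟨v, h₁⟩ ≠ f c₂ ⟨v, h₂⟩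

lemma numOnes_eq_sum_toNat {ι : Type*} [Fintype ι] (α : ι → Bool) :
    numOnes α = ∑ i, (α i).toNat := by
  rw [numOnes, Finset.card_filter]
  exact Finset.sum_congr rfl fun i _ => by cases α i <;> rfl

namespace EdgeCSP

variable {V C : Type} [Fintype V] [DecidableEq V] [Fintype C]

lemma exists_ne_mem_scope_iff (I : EdgeCSP V C) (v : V) :
    ∃ a b, a ≠ b ∧ ∀ c, v ∈ I.scope c ↔ c = a ∨ c = b := by
  classical
  obtain ⟨a, b, hab, hscope⟩ := Finset.card_eq_two.mp (I.twoOcc v)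
  refine ⟨a, b, hab, fun c => ?_⟩
  simpa using congrArg (c ∈ ·) hscope

lemma inconsistent_iff (I : EdgeCSP V C) (f : I.Labeling) {v : V} {a b : C} (hab : a ≠ b)
    (hscope : ∀ c, v ∈ I.scope c ↔ c = a ∨ c = b) :
    I.Inconsistent f v ↔
      f a ⟨v, (hscope a).2 (.inl rfl)⟩ ≠ f b ⟨v, (hscope b).2 (.inr rfl)⟩ := by
  refine ⟨?_, fun h => ⟨a, b, _, _, hab, h⟩⟩
  rintro ⟨c₁, c₂, h₁, h₂, hne, hlabel⟩
  rcases (hscope c₁).1 h₁ with rfl | rfl <;> rcases (hscope c₂).1 h₂ with rfl | rfl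
  exacts [absurd rfl hne, hlabel, hlabel.symm, absurd rfl hne]

def labelMod2 (I : EdgeCSP V C) (f : I.Labeling) (c : C) (v : V) : ZMod 2 :=
  if h : v ∈ I.scope c then (f c ⟨v, h⟩).toNat else 0

lemma sum_labelMod2_eq_numOnes (I : EdgeCSP V C) (f : I.Labeling) (c : C) :
    ∑ v, I.labelMod2 f c v = numOnes (f c) := by
  rw [numOnes_eq_sum_toNat, Nat.cast_sum, Finset.univ_eq_attach]
  exact (Finset.sum_attach_eq_sum_dite (I.scope c) fun v => ((f c v).toNat : ZMod 2)).symm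

open scoped Classical in
lemma sum_labelMod2_eq_ite_inconsistent (I : EdgeCSP V C) (f : I.Labeling) (v : V) :
    ∑ c, I.labelMod2 f c v = if I.Inconsistent f v then 1 else 0 := by
  obtain ⟨a, b, hab, hscope⟩ := I.exists_ne_mem_scope_iff v
  have hoff : ∀ c, c ≠ a ∧ c ≠ b → I.labelMod2 f c v = 0 := fun c hc =>
    dif_neg fun h => ((hscope c).1 h).elim hc.1 hc.2
  rw [Fintype.sum_eq_add a b hab hoff, labelMod2, labelMod2,
    dif_pos ((hscope a).2 (.inl rfl)), dif_pos ((hscope b).2 (.inr rfl)),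
    if_congr (I.inconsistent_iff f hab hscope) rfl rfl]
  cases f a _ <;> cases f b _ <;> decide

/-- Double counting of the labels equal to `1`: grouped by constraint they number
`∑ c, numOnes (f c)`, and grouped by variable each variable contributes its two labels, an odd
number of ones exactly when it is inconsistent. -/
lemma ncard_inconsistent_cast_eq_sum_numOnes (I : EdgeCSP V C) (f : I.Labeling) :
    ({v | I.Inconsistent f v}.ncard : ZMod 2) = ∑ c, (numOnes (f c) : ZMod 2) := by
  classical
  rw [Set.ncard_eq_toFinset_card', Set.toFinset_ofPred, Finset.card_filter, Nat.cast_sum]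
  simp_rw [← sum_labelMod2_eq_numOnes, Nat.cast_ite, Nat.cast_one, Nat.cast_zero,
    ← sum_labelMod2_eq_ite_inconsistent]
  exact Finset.sum_comm

end EdgeCSP

/-- If all constraint relations of a Boolean edge CSP instance are even Δ-matroids, then
any two valid edge labelings have the same number of inconsistent variables modulo 2. -/
theorem edgeCSP_valid_labelings_inconsistencies_mod_two
    {V C : Type} [Fintype V] [DecidableEq V] [Fintype C]
    (I : EdgeCSP V C) (hrel : ∀ c : C, IsEvenDeltaMatroid (I.rel c))
    (f g : I.Labeling) (hf : I.Valid f) (hg : I.Valid g) :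
    {v : V | I.Inconsistent f v}.ncard % 2 = {v : V | I.Inconsistent g v}.ncard % 2 := by
  rw [← ZMod.natCast_eq_natCast_iff', I.ncard_inconsistent_cast_eq_sum_numOnes f,
    I.ncard_inconsistent_cast_eq_sum_numOnes g]
  exact Finset.sum_congr rfl fun c _ =>
    (ZMod.natCast_eq_natCast_iff' _ _ 2).mpr ((hrel c).2 _ (hf c) _ (hg c))
end

section
/- Let σ be a finite set, let D ⊆ {0,1}^σ be an even Δ-matroid, let B ⊆ σ, let λ ∈ D, and let v̂ be a new element not in σ. Define D^b ⊆ {0,1}^{(σ∖B) ∪ {v̂}} as the set of all tuples β for which there exists α ∈ D agreeing with β on σ∖B such that either (i) β(v̂) = 0 and α agrees with λ on B, or (ii) β(v̂) = 1 and α differs from λ on exactly one element of B. Then D^b is an even Δ-matroid. -/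
/-- The blossom-contraction of a constraint `D` over ground set `σ`, with respect to the
set `B ⊆ σ` of blossom variables and the base tuple `lam ∈ D`.  The new ground set is
`(σ ∖ B) ∪ {v̂}`, modeled as `Option {x : σ // x ∉ B}` where `none` plays the role of
the new variable `v̂`.  A tuple `β` belongs to the contraction iff there is `α ∈ D`
agreeing with `β` on `σ ∖ B` such that either `β(v̂) = 0` and `α` agrees with `lam` on
`B`, or `β(v̂) = 1` and `α` differs from `lam` on exactly one element of `B`. -/
def contractD {σ : Type*} [DecidableEq σ] (D : Set (σ → Bool)) (B : Finset σ)
    (lam : σ → Bool) : Set (Option {x : σ // x ∉ B} → Bool) :=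
  {β | ∃ α ∈ D, (∀ x : {x : σ // x ∉ B}, α x.val = β (some x)) ∧
    ((β none = false ∧ ∀ x ∈ B, α x = lam x) ∨
     (β none = true ∧ ∃ z ∈ B, α z ≠ lam z ∧ ∀ w ∈ B, α w ≠ lam w → w = z))}

/-!
Let `π α` (`contractMap`) copy `α` off `B` and record at `v̂` the parity of the number of elements
of `B` on which `α` deviates from `lam`. Then `D^b` is the image under `π` of the members of `D`
with at most one deviation, and the parity of `π α` differs from that of `α` by the constant parity
of `lam` on `B`.

For the exchange axiom, note first that in an even Δ-matroid the exchange partner `u` of `v` is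
never `v` itself, since flipping one coordinate changes the parity. An exchange in `D` whose
partner lies outside `B` transfers to `D^b` unchanged. A partner inside `B` changes the deviation
set by one element: either the result is already admissible, with partner `v̂` in `D^b`, or exactly
one mismatch with the target remains inside `B`. An exchange at a single mismatch inside `B` must
have its partner outside `B`; this repairs the second situation and also settles exchanges at `v̂`.
-/

open Finset
open scoped symmDiff

lemma Finset.bodd_card_symmDiff {α : Type*} [DecidableEq α] (s t : Finset α) :
    (s ∆ t).card.bodd = (s.card.bodd ^^ t.card.bodd) := by
  have hsplit : #(s ∆ t) + 2 * #(s ∩ t) = #s + #t := by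
    rw [symmDiff_def, sup_eq_union, card_union_of_disjoint disjoint_sdiff_sdiff]
    have := card_sdiff_add_card_inter s t
    have := card_sdiff_add_card_inter t s
    rw [inter_comm t] at this
    omega
  simpa using congrArg Nat.bodd hsplit

lemma Nat.mod_two_eq_mod_two_iff_bodd_eq {m n : ℕ} : m % 2 = n % 2 ↔ m.bodd = n.bodd := by
  rw [Nat.mod_two_of_bodd, Nat.mod_two_of_bodd]
  cases m.bodd <;> cases n.bodd <;> simp

lemma Nat.bodd_eq_iff_of_le_one {n : ℕ} (hn : n ≤ 1) (b : Bool) :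
    n.bodd = b ↔ (b = false ∧ n = 0) ∨ (b = true ∧ n = 1) := by
  interval_cases n <;> cases b <;> simp

section BoolTuple

variable {V : Type*} [DecidableEq V]

lemma flipS_apply_of_mem (α : V → Bool) {S : Finset V} {v : V} (h : v ∈ S) :
    flipS α S v = !α v := if_pos h

lemma flipS_apply_of_notMem (α : V → Bool) {S : Finset V} {v : V} (h : v ∉ S) :
    flipS α S v = α v := if_neg h

lemma flipS_flipS_pair (f : V → Bool) {a b c : V} (hab : a ≠ b) (hac : a ≠ c) (hbc : b ≠ c) :
    flipS (flipS f {a, b}) {a, c} = flipS f {b, c} := by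
  funext v
  by_cases hva : v = a <;> by_cases hvb : v = b <;> by_cases hvc : v = c <;>
    simp_all [flipS]

lemma filter_flipS_ne (s S : Finset V) (α β : V → Bool) :
    s.filter (fun v => flipS α S v ≠ β v) = s.filter (fun v => α v ≠ β v) ∆ (s ∩ S) := by
  ext v
  rw [mem_filter, mem_symmDiff, mem_filter, mem_inter, flipS]
  by_cases hv : v ∈ S <;> by_cases hs : v ∈ s <;> simp only [hv, hs, if_true, if_false] <;>
    cases α v <;> cases β v <;> simp

variable [Fintype V]

lemma bodd_numOnes_flipS (α : V → Bool) (S : Finset V) :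
    (numOnes (flipS α S)).bodd = ((numOnes α).bodd ^^ S.card.bodd) := by
  have h := filter_flipS_ne univ S α fun _ => false
  simp only [ne_eq, Bool.not_eq_false] at h
  rw [numOnes, numOnes, h, bodd_card_symmDiff, univ_inter]

lemma numOnes_eq_card_filter_add_sum_compl (s : Finset V) (α : V → Bool) :
    numOnes α = #(s.filter (α · = true)) + ∑ v ∈ sᶜ, if α v = true then 1 else 0 := by
  rw [numOnes, card_filter, card_filter, sum_add_sum_compl]

lemma IsEvenDeltaMatroid.exists_exchange_ne {M : Set (V → Bool)} (hM : IsEvenDeltaMatroid M)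
    {α β : V → Bool} (hα : α ∈ M) (hβ : β ∈ M) {v : V} (hv : α v ≠ β v) :
    ∃ u, u ≠ v ∧ α u ≠ β u ∧ flipS α {u, v} ∈ M := by
  obtain ⟨u, hu, hflip⟩ := hM.1.2 α hα β hβ v hv
  refine ⟨u, ?_, hu, hflip⟩
  rintro rfl
  rw [pair_eq_singleton] at hflip
  have hpar := Nat.mod_two_eq_mod_two_iff_bodd_eq.1 (hM.2 α hα _ hflip)
  simp [bodd_numOnes_flipS] at hpar

end BoolTuple

section Contraction

variable {σ : Type*} [DecidableEq σ] (B : Finset σ) (lam : σ → Bool)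

def deviations (α : σ → Bool) : Finset σ := B.filter fun w => α w ≠ lam w

/-- The new variable `none` records the parity of the number of deviations rather than their
existence, so that flips act on it additively; the two agree when there is at most one deviation,
which is the case for the witnesses of `contractD` (see `mem_contractD_iff`). -/
def contractMap (α : σ → Bool) : Option {x // x ∉ B} → Bool
  | none => (deviations B lam α).card.bodd
  | some x => α x

variable {B lam}

lemma mem_symmDiff_deviations {α β : σ → Bool} {w : σ} :
    w ∈ deviations B lam α ∆ deviations B lam β ↔ w ∈ B ∧ α w ≠ β w := by
  simp only [deviations, mem_symmDiff, mem_filter]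
  by_cases hw : w ∈ B <;> cases α w <;> cases β w <;> cases lam w <;> simp [hw]

lemma deviations_eq_symmDiff (α : σ → Bool) :
    deviations B lam α = B.filter (α · = true) ∆ B.filter (lam · = true) := by
  ext w
  simp only [deviations, mem_filter, mem_symmDiff]
  cases α w <;> cases lam w <;> simp

lemma deviations_flipS (α : σ → Bool) (S : Finset σ) :
    deviations B lam (flipS α S) = deviations B lam α ∆ (B ∩ S) :=
  filter_flipS_ne B S α lam

lemma deviations_flipS_of_disjoint (α : σ → Bool) {S : Finset σ} (h : Disjoint B S) :
    deviations B lam (flipS α S) = deviations B lam α := by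
  rw [deviations_flipS, disjoint_iff_inter_eq_empty.1 h]
  exact symmDiff_eq_left.2 rfl

lemma deviations_flipS_pair (α : σ → Bool) {w u : σ} (hw : w ∈ B) (hu : u ∉ B) :
    deviations B lam (flipS α {w, u}) = deviations B lam α ∆ {w} := by
  rw [deviations_flipS, inter_insert_of_mem hw, inter_singleton_of_notMem hu, insert_empty]

lemma contractMap_flipS_outer (α : σ → Bool) (y z : {x // x ∉ B}) :
    contractMap B lam (flipS α {y.1, z.1}) = flipS (contractMap B lam α) {some y, some z} := by
  have hdisj : Disjoint B {y.1, z.1} := by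
    simp only [disjoint_insert_right, disjoint_singleton_right]
    exact ⟨y.2, z.2⟩
  funext o
  cases o with
  | none => simp only [contractMap, deviations_flipS_of_disjoint α hdisj]; simp [flipS, contractMap]
  | some x => simp [contractMap, flipS, Subtype.ext_iff]

lemma contractMap_flipS_blossom (α : σ → Bool) {w : σ} (hw : w ∈ B) (y : {x // x ∉ B}) :
    contractMap B lam (flipS α {w, y.1}) = flipS (contractMap B lam α) {none, some y} := by
  funext o
  cases o with
  | none =>
    simp only [contractMap, deviations_flipS_pair α hw y.2]
    simp [flipS, contractMap, bodd_card_symmDiff]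
  | some x =>
    have hxw : x.1 ≠ w := fun h => x.2 (h ▸ hw)
    simp [contractMap, flipS, Subtype.ext_iff, hxw]

lemma mem_contractD_iff {D : Set (σ → Bool)} {β : Option {x // x ∉ B} → Bool} :
    β ∈ contractD D B lam ↔
      ∃ α ∈ D, #(deviations B lam α) ≤ 1 ∧ contractMap B lam α = β := by
  have hdev (α : σ → Bool) : ((β none = false ∧ ∀ x ∈ B, α x = lam x) ∨
      (β none = true ∧ ∃ z ∈ B, α z ≠ lam z ∧ ∀ w ∈ B, α w ≠ lam w → w = z)) ↔
      #(deviations B lam α) ≤ 1 ∧ (deviations B lam α).card.bodd = β none := by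
    have h0 : (∀ x ∈ B, α x = lam x) ↔ #(deviations B lam α) = 0 := by
      simp [deviations, filter_eq_empty_iff]
    have h1 : (∃ z ∈ B, α z ≠ lam z ∧ ∀ w ∈ B, α w ≠ lam w → w = z) ↔
        #(deviations B lam α) = 1 := by
      simp only [card_eq_one, eq_singleton_iff_unique_mem, deviations, mem_filter]
      grind
    rw [h0, h1]
    constructor
    · rintro (⟨hb, hc⟩ | ⟨hb, hc⟩) <;> simp [hb, hc]
    · rintro ⟨hle, hb⟩
      rw [Nat.bodd_eq_iff_of_le_one hle] at hb
      tauto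
  simp only [contractD, Set.mem_ofPred_eq, hdev, funext_iff, Option.forall, contractMap]
  grind

lemma card_symmDiff_deviations_le_two {α α' : σ → Bool} (hα : #(deviations B lam α) ≤ 1)
    (hα' : #(deviations B lam α') ≤ 1) :
    #(deviations B lam α ∆ deviations B lam α') ≤ 2 :=
  calc _ ≤ #(deviations B lam α ∪ deviations B lam α') := card_le_card symmDiff_subset_union
    _ ≤ 2 := (card_union_le _ _).trans (by omega)

lemma bodd_card_symmDiff_deviations (α α' : σ → Bool) :
    (deviations B lam α ∆ deviations B lam α').card.bodd =
      (contractMap B lam α none ^^ contractMap B lam α' none) :=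
  bodd_card_symmDiff _ _

variable [Fintype σ]

lemma numOnes_contractMap (α : σ → Bool) :
    numOnes (contractMap B lam α) =
      (deviations B lam α).card.bodd.toNat + ∑ x ∈ Bᶜ, if α x = true then 1 else 0 := by
  rw [numOnes, card_filter, Fintype.sum_option]
  congr 1
  · cases h : (deviations B lam α).card.bodd <;> simp [contractMap, h]
  · exact (sum_subtype Bᶜ (fun _ => mem_compl) fun x => if α x = true then 1 else 0).symm

lemma bodd_numOnes_contractMap (α : σ → Bool) :
    (numOnes (contractMap B lam α)).bodd =
      ((numOnes α).bodd ^^ (B.filter (lam · = true)).card.bodd) := by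
  rw [numOnes_contractMap, numOnes_eq_card_filter_add_sum_compl B, deviations_eq_symmDiff,
    bodd_card_symmDiff, Nat.bodd_add, Nat.bodd_add]
  generalize (B.filter (α · = true)).card.bodd = a
  generalize (B.filter (lam · = true)).card.bodd = l
  cases a <;> cases l <;> simp

variable {D : Set (σ → Bool)}

lemma exists_outer_exchange (hD : IsEvenDeltaMatroid D) {γ α' : σ → Bool} (hγ : γ ∈ D)
    (hα' : α' ∈ D) {w : σ} (hw : deviations B lam γ ∆ deviations B lam α' = {w}) :
    ∃ u : {x // x ∉ B}, γ u ≠ α' u ∧ flipS γ {u.1, w} ∈ D ∧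
      deviations B lam (flipS γ {u.1, w}) = deviations B lam α' := by
  obtain ⟨hwB, hγw⟩ := mem_symmDiff_deviations.1 (hw ▸ mem_singleton_self w)
  obtain ⟨u, huw, hu, hflip⟩ := hD.exists_exchange_ne hγ hα' hγw
  have huB : u ∉ B := fun huB => huw (mem_singleton.1 (hw ▸ mem_symmDiff_deviations.2 ⟨huB, hu⟩))
  refine ⟨⟨u, huB⟩, hu, hflip, ?_⟩
  rw [pair_comm, deviations_flipS_pair γ hwB huB, ← hw, symmDiff_symmDiff_cancel_left]

variable {α α' : σ → Bool}

lemma exists_exchange_none (hD : IsEvenDeltaMatroid D) (hα : α ∈ D) (hα' : α' ∈ D)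
    (hgood : #(deviations B lam α) ≤ 1) (hgood' : #(deviations B lam α') ≤ 1)
    (hv : contractMap B lam α none ≠ contractMap B lam α' none) :
    ∃ u, contractMap B lam α u ≠ contractMap B lam α' u ∧
      flipS (contractMap B lam α) {u, none} ∈ contractD D B lam := by
  have hodd : (deviations B lam α ∆ deviations B lam α').card.bodd = true := by
    rw [bodd_card_symmDiff_deviations]
    simpa using hv
  obtain ⟨w, hw⟩ : ∃ w, deviations B lam α ∆ deviations B lam α' = {w} := by
    have := card_symmDiff_deviations_le_two hgood hgood'
    refine card_eq_one.1 ?_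
    interval_cases h : #(deviations B lam α ∆ deviations B lam α') <;> simp_all
  obtain ⟨hwB, -⟩ := mem_symmDiff_deviations.1 (hw ▸ mem_singleton_self w)
  obtain ⟨u, hu, hflip, hdev⟩ := exists_outer_exchange hD hα hα' hw
  refine ⟨some u, hu, mem_contractD_iff.2 ⟨_, hflip, hdev ▸ hgood', ?_⟩⟩
  rw [pair_comm, contractMap_flipS_blossom α hwB u, pair_comm]

lemma exists_double_exchange (hD : IsEvenDeltaMatroid D) (hα' : α' ∈ D)
    (hgood' : #(deviations B lam α') ≤ 1) {u : σ} (huB : u ∈ B) {x : {x // x ∉ B}}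
    (hx : α x ≠ α' x) (hflip : flipS α {u, x.1} ∈ D) {w : σ}
    (hw : deviations B lam (flipS α {u, x.1}) ∆ deviations B lam α' = {w}) :
    ∃ u', contractMap B lam α u' ≠ contractMap B lam α' u' ∧
      flipS (contractMap B lam α) {u', some x} ∈ contractD D B lam := by
  set γ := flipS α {u, x.1}
  obtain ⟨hwB, -⟩ := mem_symmDiff_deviations.1 (hw ▸ mem_singleton_self w)
  obtain ⟨y, hy, hflip₂, hdev₂⟩ := exists_outer_exchange hD hflip hα' hw
  have hyx : y ≠ x := by
    rintro rfl
    have hγy : γ y = !α y := flipS_apply_of_mem α (mem_insert_of_mem (mem_singleton_self _))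
    rw [hγy] at hy
    revert hy hx
    cases α y <;> cases α' y <;> simp
  have hγy : γ y = α y := by
    refine flipS_apply_of_notMem α ?_
    simp only [mem_insert, mem_singleton, not_or]
    exact ⟨fun h => y.2 (h ▸ huB), fun h => hyx (Subtype.ext h)⟩
  refine ⟨some y, by rwa [hγy] at hy, mem_contractD_iff.2 ⟨_, hflip₂, hdev₂ ▸ hgood', ?_⟩⟩
  rw [pair_comm, contractMap_flipS_blossom γ hwB y, contractMap_flipS_blossom α huB x,
    flipS_flipS_pair _ (by simp) (by simp) (by simpa using hyx.symm), pair_comm]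

lemma exists_exchange_some (hD : IsEvenDeltaMatroid D) (hα : α ∈ D) (hα' : α' ∈ D)
    (hgood : #(deviations B lam α) ≤ 1) (hgood' : #(deviations B lam α') ≤ 1)
    {x : {x // x ∉ B}} (hv : contractMap B lam α (some x) ≠ contractMap B lam α' (some x)) :
    ∃ u, contractMap B lam α u ≠ contractMap B lam α' u ∧
      flipS (contractMap B lam α) {u, some x} ∈ contractD D B lam := by
  obtain ⟨u, -, hu, hflip⟩ := hD.exists_exchange_ne hα hα' (v := x.1) hv
  by_cases huB : u ∈ B
  swap
  · have hdisj : Disjoint B {u, x.1} := by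
      simp only [disjoint_insert_right, disjoint_singleton_right]
      exact ⟨huB, x.2⟩
    refine ⟨some ⟨u, huB⟩, hu, mem_contractD_iff.2 ⟨_, hflip, ?_, ?_⟩⟩
    · rwa [deviations_flipS_of_disjoint α hdisj]
    · exact contractMap_flipS_outer α ⟨u, huB⟩ x
  have hle := card_symmDiff_deviations_le_two hgood hgood'
  have hpar := bodd_card_symmDiff_deviations (B := B) (lam := lam) α α'
  set E := deviations B lam α ∆ deviations B lam α' with hEdef
  have huE : u ∈ E := mem_symmDiff_deviations.2 ⟨huB, hu⟩
  have hγ : deviations B lam (flipS α {u, x.1}) = deviations B lam α ∆ {u} :=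
    deviations_flipS_pair α huB x.2
  have hE : #E = 1 ∨ #E = 2 := by
    have := card_pos.2 ⟨u, huE⟩
    omega
  rcases hE with hE | hE
  · -- `E = {u}`: flipping `u` turns the deviations of `α` into those of `α'`
    obtain ⟨w, hw⟩ := card_eq_one.1 hE
    have hEu : E = {u} := by rw [hw] at huE ⊢; rw [mem_singleton.1 huE]
    refine ⟨none, fun h => ?_, mem_contractD_iff.2 ⟨_, hflip, ?_,
      contractMap_flipS_blossom α huB x⟩⟩
    · rw [hE, h, Bool.xor_self] at hpar
      exact absurd hpar (by decide)
    · rwa [hγ, ← hEu, hEdef, symmDiff_symmDiff_cancel_left]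
  · obtain ⟨w, hw⟩ : ∃ w, deviations B lam (flipS α {u, x.1}) ∆ deviations B lam α' = {w} := by
      rw [hγ, symmDiff_right_comm, ← hEdef, symmDiff_of_ge (singleton_subset_iff.2 huE),
        sdiff_singleton_eq_erase]
      exact card_eq_one.1 (by rw [card_erase_of_mem huE, hE])
    exact exists_double_exchange hD hα' hgood' huB hv hflip hw

end Contraction

/-- If `D` is an even Δ-matroid over a finite ground set `σ`, `B ⊆ σ`, and `lam ∈ D`,
then the blossom-contraction `D^b` is again an even Δ-matroid. -/
theorem contractD_isEvenDeltaMatroid {σ : Type} [Fintype σ] [DecidableEq σ]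
    (D : Set (σ → Bool)) (B : Finset σ) (lam : σ → Bool)
    (hD : IsEvenDeltaMatroid D) (hlam : lam ∈ D) :
    IsEvenDeltaMatroid (contractD D B lam) := by
  refine ⟨⟨⟨_, mem_contractD_iff.2 ⟨lam, hlam, by simp [deviations], rfl⟩⟩, ?_⟩, ?_⟩
  · intro β hβ β' hβ' v hv
    obtain ⟨α, hα, hgood, rfl⟩ := mem_contractD_iff.1 hβ
    obtain ⟨α', hα', hgood', rfl⟩ := mem_contractD_iff.1 hβ'
    cases v with
    | none => exact exists_exchange_none hD hα hα' hgood hgood' hv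
    | some x => exact exists_exchange_some hD hα hα' hgood hgood' hv
  · intro β hβ β' hβ'
    obtain ⟨α, hα, -, rfl⟩ := mem_contractD_iff.1 hβ
    obtain ⟨α', hα', -, rfl⟩ := mem_contractD_iff.1 hβ'
    rw [Nat.mod_two_eq_mod_two_iff_bodd_eq, bodd_numOnes_contractMap, bodd_numOnes_contractMap,
      Nat.mod_two_eq_mod_two_iff_bodd_eq.1 (hD.2 α hα α' hα')]
end

section
/- If M ⊆ {0,1}^U and N ⊆ {0,1}^V are coverable Δ-matroids on disjoint finite ground sets U and V, then their direct product M × N ⊆ {0,1}^{U ∪ V} is a coverable Δ-matroid. -/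
/-- Flip the value of a Boolean tuple at a single coordinate. -/
def flip1 {V : Type*} [DecidableEq V] (α : V → Bool) (u : V) : V → Bool :=
  flipS α {u}

/-- `α` and `β` are even-neighbors with respect to `M`. -/
def EvenNeighbors {V : Type*} [DecidableEq V] (M : Set (V → Bool)) (α β : V → Bool) : Prop :=
  ∃ u v, u ≠ v ∧ β = flip1 (flip1 α u) v ∧ flip1 α u ∉ M

/-- Reachability via chains of even-neighbors inside `M`. -/
def Reachable {V : Type*} [DecidableEq V] (M : Set (V → Bool)) :
    (V → Bool) → (V → Bool) → Prop :=
  Relation.ReflTransGen (fun x y => x ∈ M ∧ y ∈ M ∧ EvenNeighbors M x y)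

/-- `M` is coverable. -/
def Coverable {V : Type*} [Fintype V] [DecidableEq V] (M : Set (V → Bool)) : Prop :=
  ∀ α ∈ M, ∃ Mα : Set (V → Bool),
    IsEvenDeltaMatroid Mα ∧
    (∀ β ∈ M, Reachable M α β → β ∈ Mα) ∧
    (∀ γ ∈ M, Reachable M α γ → ∀ u v,
      flip1 (flip1 γ u) v ∈ Mα → flip1 (flip1 γ u) v ∉ M →
      flip1 γ u ∈ M ∧ flip1 γ v ∈ M)

/-- Direct product of two sets of tuples on disjoint ground sets. -/
def prodSet {U V : Type*} (M : Set (U → Bool)) (N : Set (V → Bool)) :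
    Set (U ⊕ V → Bool) :=
  {h | (fun u => h (Sum.inl u)) ∈ M ∧ (fun v => h (Sum.inr v)) ∈ N}

/-- `M` is an even-zebra Δ-matroid. -/
def IsEvenZebra {V : Type*} [Fintype V] [DecidableEq V] (M : Set (V → Bool)) : Prop :=
  ∀ α ∈ M, ∃ Mα : Set (V → Bool),
    IsEvenDeltaMatroid Mα ∧
    (∀ β ∈ M, numOnes β % 2 = numOnes α % 2 → β ∈ Mα) ∧
    (∀ β ∈ M, ∀ u v, flip1 (flip1 β u) v ∈ Mα → flip1 (flip1 β u) v ∉ M →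
      flip1 β u ∈ M ∧ flip1 β v ∈ M)

/-- Identification of two variables of `M`. -/
def identify {U : Type*} [DecidableEq U] (M : Set (U → Bool)) (w₁ w₂ : U) :
    Set ({x : U // x ≠ w₁ ∧ x ≠ w₂} → Bool) :=
  {g | ∃ β ∈ M, β w₁ = β w₂ ∧ ∀ x : {x : U // x ≠ w₁ ∧ x ≠ w₂}, g x = β x.val}


/-!
Everything in `prodSet M N` happens on one side at a time. A double flip `γ ⊕ u ⊕ v` with `u`
and `v` on different sides can neither be an even-neighbor step (the intermediate single flip
would already lie in the product) nor land in a product of even Δ-matroids (it changes the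
parity on each side). Hence even-neighbor chains in `M × N` project to chains in `M` and in `N`,
and for `α ∈ M × N` the product `M_{α_U} × N_{α_V}` of the covering sets of the two projections
is a covering set for `α`.
-/

section Flip

variable {V W : Type*} [DecidableEq V]

lemma flipS_comp [DecidableEq W] {f : W → V} (α : V → Bool) {S : Finset V} {T : Finset W}
    (hST : ∀ x, f x ∈ S ↔ x ∈ T) : flipS α S ∘ f = flipS (α ∘ f) T := by
  funext x
  simp only [Function.comp_apply, flipS, hST]

lemma flipS_comp_of_forall_notMem {f : W → V} (α : V → Bool) {S : Finset V}
    (hS : ∀ x, f x ∉ S) : flipS α S ∘ f = α ∘ f := by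
  funext x
  simp only [Function.comp_apply, flipS, hS, if_false]

lemma numOnes_flip1_mod_two_ne [Fintype V] (α : V → Bool) (u : V) :
    numOnes (flip1 α u) % 2 ≠ numOnes α % 2 := by
  have split (β : V → Bool) : numOnes β =
      (if β u = true then 1 else 0) + ∑ x ∈ Finset.univ.erase u, if β x = true then 1 else 0 := by
    rw [numOnes, Finset.card_filter, ← Finset.add_sum_erase _ _ (Finset.mem_univ u)]
  have hrest : (∑ x ∈ Finset.univ.erase u, if flip1 α u x = true then 1 else 0) =
      ∑ x ∈ Finset.univ.erase u, if α x = true then 1 else 0 :=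
    Finset.sum_congr rfl fun x hx => by simp [flip1, flipS, Finset.ne_of_mem_erase hx]
  have hu : flip1 α u u = !α u := by simp [flip1, flipS]
  rw [split, split α, hrest, hu]
  cases α u <;> simp only [Bool.not_true, Bool.not_false, Bool.false_eq_true, ↓reduceIte] <;> omega

lemma IsEvenDeltaMatroid.flip1_notMem [Fintype V] {M : Set (V → Bool)}
    (hM : IsEvenDeltaMatroid M) {α : V → Bool} (hα : α ∈ M) (u : V) : flip1 α u ∉ M :=
  fun h => numOnes_flip1_mod_two_ne α u (hM.2 _ h _ hα)

end Flip

/-- Condition (3) of coverability at a single tuple `γ`, for the candidate cover `Mα` of `M`. -/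
def CoversAt {V : Type*} [DecidableEq V] (M Mα : Set (V → Bool)) (γ : V → Bool) : Prop :=
  ∀ u v, flip1 (flip1 γ u) v ∈ Mα → flip1 (flip1 γ u) v ∉ M →
    flip1 γ u ∈ M ∧ flip1 γ v ∈ M

lemma mem_prodSet {U V : Type*} {M : Set (U → Bool)} {N : Set (V → Bool)} {h : U ⊕ V → Bool} :
    h ∈ prodSet M N ↔ h ∘ Sum.inl ∈ M ∧ h ∘ Sum.inr ∈ N := Iff.rfl

lemma numOnes_sum {U V : Type*} [Fintype U] [Fintype V] (h : U ⊕ V → Bool) :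
    numOnes h = numOnes (h ∘ Sum.inl) + numOnes (h ∘ Sum.inr) := by
  simp only [numOnes, Finset.card_filter, Fintype.sum_sum_type, Function.comp_apply]

section Product

variable {U V : Type*} [DecidableEq U] [DecidableEq V]
  {M M₁ : Set (U → Bool)} {N N₁ : Set (V → Bool)}

@[simp] lemma flip1_inl_comp_inl (h : U ⊕ V → Bool) (a : U) :
    flip1 h (.inl a) ∘ Sum.inl = flip1 (h ∘ Sum.inl) a :=
  flipS_comp h (by simp)

@[simp] lemma flip1_inl_comp_inr (h : U ⊕ V → Bool) (a : U) :
    flip1 h (.inl a) ∘ Sum.inr = h ∘ Sum.inr :=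
  flipS_comp_of_forall_notMem h (by simp)

@[simp] lemma flip1_inr_comp_inl (h : U ⊕ V → Bool) (a : V) :
    flip1 h (.inr a) ∘ Sum.inl = h ∘ Sum.inl :=
  flipS_comp_of_forall_notMem h (by simp)

@[simp] lemma flip1_inr_comp_inr (h : U ⊕ V → Bool) (a : V) :
    flip1 h (.inr a) ∘ Sum.inr = flip1 (h ∘ Sum.inr) a :=
  flipS_comp h (by simp)

lemma IsDeltaMatroid.prodSet (hM : IsDeltaMatroid M) (hN : IsDeltaMatroid N) :
    IsDeltaMatroid (prodSet M N) := by
  obtain ⟨⟨m, hm⟩, hexM⟩ := hM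
  obtain ⟨⟨n, hn⟩, hexN⟩ := hN
  refine ⟨⟨Sum.elim m n, hm, hn⟩, ?_⟩
  rintro α ⟨hαM, hαN⟩ β ⟨hβM, hβN⟩ (a | a) hne
  · obtain ⟨u, hu, hmem⟩ := hexM _ hαM _ hβM a hne
    refine ⟨.inl u, hu, mem_prodSet.2 ⟨?_, ?_⟩⟩
    · rwa [flipS_comp (T := {u, a}) α (by simp)]
    · rwa [flipS_comp_of_forall_notMem α (by simp)]
  · obtain ⟨u, hu, hmem⟩ := hexN _ hαN _ hβN a hne
    refine ⟨.inr u, hu, mem_prodSet.2 ⟨?_, ?_⟩⟩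
    · rwa [flipS_comp_of_forall_notMem α (by simp)]
    · rwa [flipS_comp (T := {u, a}) α (by simp)]

lemma IsEvenDeltaMatroid.prodSet [Fintype U] [Fintype V] (hM : IsEvenDeltaMatroid M)
    (hN : IsEvenDeltaMatroid N) : IsEvenDeltaMatroid (prodSet M N) := by
  refine ⟨hM.1.prodSet hN.1, fun α hα β hβ => ?_⟩
  rw [mem_prodSet] at hα hβ
  rw [numOnes_sum α, numOnes_sum β, Nat.add_mod, Nat.add_mod (numOnes _),
    hM.2 _ hα.1 _ hβ.1, hN.2 _ hα.2 _ hβ.2]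

lemma EvenNeighbors.of_prodSet {x y : U ⊕ V → Bool} (hx : x ∈ prodSet M N)
    (hy : y ∈ prodSet M N) (hxy : EvenNeighbors (prodSet M N) x y) :
    (EvenNeighbors M (x ∘ Sum.inl) (y ∘ Sum.inl) ∧ y ∘ Sum.inr = x ∘ Sum.inr) ∨
      (EvenNeighbors N (x ∘ Sum.inr) (y ∘ Sum.inr) ∧ y ∘ Sum.inl = x ∘ Sum.inl) := by
  obtain ⟨u, v, huv, rfl, hnot⟩ := hxy
  rw [mem_prodSet] at hx hy hnot
  rcases u with a | a <;> rcases v with b | b <;>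
    simp only [flip1_inl_comp_inl, flip1_inl_comp_inr, flip1_inr_comp_inl,
      flip1_inr_comp_inr] at hy hnot ⊢
  · exact .inl ⟨⟨a, b, by simpa using huv, rfl, fun h => hnot ⟨h, hx.2⟩⟩, trivial⟩
  · exact absurd ⟨hy.1, hx.2⟩ hnot
  · exact absurd ⟨hx.1, hy.2⟩ hnot
  · exact .inr ⟨⟨a, b, by simpa using huv, rfl, fun h => hnot ⟨hx.1, h⟩⟩, trivial⟩

lemma Reachable.of_prodSet {α β : U ⊕ V → Bool} (h : Reachable (prodSet M N) α β) :
    Reachable M (α ∘ Sum.inl) (β ∘ Sum.inl) ∧ Reachable N (α ∘ Sum.inr) (β ∘ Sum.inr) := by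
  induction h with
  | refl => exact ⟨Relation.ReflTransGen.refl, Relation.ReflTransGen.refl⟩
  | tail _ hstep ih =>
    obtain ⟨hx, hy, hxy⟩ := hstep
    rcases hxy.of_prodSet hx hy with ⟨hL, hR⟩ | ⟨hR, hL⟩
    · exact ⟨ih.1.tail ⟨hx.1, hy.1, hL⟩, hR ▸ ih.2⟩
    · exact ⟨hL ▸ ih.1, ih.2.tail ⟨hx.2, hy.2, hR⟩⟩

lemma CoversAt.prodSet [Fintype U] (hM₁ : IsEvenDeltaMatroid M₁) {γ : U ⊕ V → Bool} (hγ : γ ∈ prodSet M N)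
    (hγ₁ : γ ∈ prodSet M₁ N₁) (hL : CoversAt M M₁ (γ ∘ Sum.inl))
    (hR : CoversAt N N₁ (γ ∘ Sum.inr)) : CoversAt (prodSet M N) (prodSet M₁ N₁) γ := by
  intro u v hmem hnot
  rw [mem_prodSet] at hmem hnot
  rcases u with a | a <;> rcases v with b | b <;>
    simp only [mem_prodSet, flip1_inl_comp_inl, flip1_inl_comp_inr, flip1_inr_comp_inl,
      flip1_inr_comp_inr] at hmem hnot ⊢
  · have hab := hL a b hmem.1 fun h => hnot ⟨h, hγ.2⟩
    exact ⟨⟨hab.1, hγ.2⟩, hab.2, hγ.2⟩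
  · exact (hM₁.flip1_notMem hγ₁.1 a hmem.1).elim
  · exact (hM₁.flip1_notMem hγ₁.1 b hmem.1).elim
  · have hab := hR a b hmem.2 fun h => hnot ⟨hγ.1, h⟩
    exact ⟨⟨hγ.1, hab.1⟩, hγ.1, hab.2⟩

end Product

/-- The direct product of two coverable Δ-matroids on disjoint ground sets is a
coverable Δ-matroid. -/
theorem prodSet_coverable {U V : Type} [Fintype U] [DecidableEq U] [Fintype V] [DecidableEq V]
    (M : Set (U → Bool)) (N : Set (V → Bool))
    (hM : IsDeltaMatroid M) (hMc : Coverable M)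
    (hN : IsDeltaMatroid N) (hNc : Coverable N) :
    IsDeltaMatroid (prodSet M N) ∧ Coverable (prodSet M N) := by
  refine ⟨hM.prodSet hN, fun α hα => ?_⟩
  obtain ⟨M₁, hM₁, hreachM, hcovM⟩ := hMc _ hα.1
  obtain ⟨N₁, hN₁, hreachN, hcovN⟩ := hNc _ hα.2
  have hreach : ∀ β ∈ prodSet M N, Reachable (prodSet M N) α β → β ∈ prodSet M₁ N₁ :=
    fun β hβ hαβ => ⟨hreachM _ hβ.1 hαβ.of_prodSet.1, hreachN _ hβ.2 hαβ.of_prodSet.2⟩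
  refine ⟨prodSet M₁ N₁, hM₁.prodSet hN₁, hreach, fun γ hγ hαγ => ?_⟩
  exact CoversAt.prodSet hM₁ hγ (hreach γ hγ hαγ) (hcovM _ hγ.1 hαγ.of_prodSet.1)
    (hcovN _ hγ.2 hαγ.of_prodSet.2)
end

section
/- Let M ⊆ {0,1}^U and N ⊆ {0,1}^V be Δ-matroids on disjoint finite ground sets. If (α,β) and (γ,δ) are even-neighbors in the direct product M × N, then either α = γ and β, δ are even-neighbors in N, or β = δ and α, γ are even-neighbors in M. -/
/-!
A step that flips coordinates in different factors passes through a member of `M × N`: if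
`(γ, δ) = (α ⊕ u, β ⊕ v)` then `γ ∈ M`, so `(α ⊕ u, β) ∈ M × N`. Hence an even-neighbor step of
`M × N` flips two coordinates of one factor, and is an even-neighbor step of that factor.
-/
section
variable {U V : Type*} [DecidableEq U] [DecidableEq V]

@[simp]
lemma flip1_sumElim_inl (α : U → Bool) (β : V → Bool) (u : U) :
    flip1 (Sum.elim α β) (.inl u) = Sum.elim (flip1 α u) β := by
  funext x
  cases x <;> simp [flip1, flipS]

@[simp]
lemma flip1_sumElim_inr (α : U → Bool) (β : V → Bool) (v : V) :
    flip1 (Sum.elim α β) (.inr v) = Sum.elim α (flip1 β v) := by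
  funext x
  cases x <;> simp [flip1, flipS]

end

@[simp]
lemma sumElim_mem_prodSet {U V : Type*} (M : Set (U → Bool)) (N : Set (V → Bool))
    (α : U → Bool) (β : V → Bool) :
    Sum.elim α β ∈ prodSet M N ↔ α ∈ M ∧ β ∈ N :=
  Iff.rfl

theorem evenNeighbors_prodSet_general {U V : Type} [DecidableEq U] [DecidableEq V]
    (M : Set (U → Bool)) (N : Set (V → Bool))
    (α γ : U → Bool) (β δ : V → Bool)
    (hαβ : Sum.elim α β ∈ prodSet M N) (hγδ : Sum.elim γ δ ∈ prodSet M N)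
    (h : EvenNeighbors (prodSet M N) (Sum.elim α β) (Sum.elim γ δ)) :
    (α = γ ∧ EvenNeighbors N β δ) ∨ (β = δ ∧ EvenNeighbors M α γ) := by
  obtain ⟨u, v, huv, hstep, hmid⟩ := h
  rw [sumElim_mem_prodSet] at hαβ hγδ
  rcases u with u | u <;> rcases v with v | v <;>
    simp only [flip1_sumElim_inl, flip1_sumElim_inr, Sum.elim_eq_iff, sumElim_mem_prodSet,
      ne_eq, Sum.inl.injEq, Sum.inr.injEq, reduceCtorEq] at hstep hmid huv
  case inl.inl => exact .inr ⟨hstep.2.symm, u, v, huv, hstep.1, fun hu => hmid ⟨hu, hαβ.2⟩⟩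
  case inl.inr => exact absurd ⟨hstep.1 ▸ hγδ.1, hαβ.2⟩ hmid
  case inr.inl => exact absurd ⟨hαβ.1, hstep.2 ▸ hγδ.2⟩ hmid
  case inr.inr => exact .inl ⟨hstep.1.symm, u, v, huv, hstep.2, fun hu => hmid ⟨hαβ.1, hu⟩⟩

/-- If `(α,β)` and `(γ,δ)` are even-neighbors in the direct product `M × N` of two
Δ-matroids on disjoint ground sets, then either `α = γ` and `β, δ` are even-neighbors
in `N`, or `β = δ` and `α, γ` are even-neighbors in `M`. -/
theorem evenNeighbors_prodSet {U V : Type} [DecidableEq U] [DecidableEq V]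
    (M : Set (U → Bool)) (N : Set (V → Bool))
    (hM : IsDeltaMatroid M) (hN : IsDeltaMatroid N)
    (α γ : U → Bool) (β δ : V → Bool)
    (hαβ : Sum.elim α β ∈ prodSet M N) (hγδ : Sum.elim γ δ ∈ prodSet M N)
    (h : EvenNeighbors (prodSet M N) (Sum.elim α β) (Sum.elim γ δ)) :
    (α = γ ∧ EvenNeighbors N β δ) ∨ (β = δ ∧ EvenNeighbors M α γ) :=
  evenNeighbors_prodSet_general M N α γ β δ hαβ hγδ h
end

section
/- Let M ⊆ {0,1}^a be a matching realizable even Δ-matroid and let f, g ∈ M. Then the set f △ g of coordinates where f and g differ can be partitioned into two-element sets P₁, …, P_k such that f ⊕ P_i ∈ M and g ⊕ P_i ∈ M for every i = 1, …, k. -/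
/-- A simple graph has a perfect matching. -/
def HasPerfectMatching {W : Type*} (G : SimpleGraph W) : Prop :=
  ∃ P : G.Subgraph, P.IsPerfectMatching

/-- A relation `R ⊆ {0,1}^a` is matching realizable if there are a finite simple graph
`G` and distinct vertices `v₁, …, v_a` such that `T ∈ R` iff the graph obtained from `G`
by deleting the vertices `v_i` with `T i = 1` has a perfect matching. -/
def MatchingRealizable {a : ℕ} (R : Set (Fin a → Bool)) : Prop :=
  ∃ (W : Type) (_ : Fintype W) (G : SimpleGraph W) (v : Fin a → W),
    Function.Injective v ∧
    ∀ T : Fin a → Bool,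
      T ∈ R ↔ HasPerfectMatching (G.induce {w : W | ∀ i, v i = w → T i = false})

/-!
Realize `M` by a graph `G` with terminals `v`. Perfect matchings of the graphs left after deleting
the terminals marked by `f` and by `g` are involutions `σ` and `τ` of the vertex set whose fixed
points are the deleted vertices, so the vertices fixed by exactly one of them are the terminals
`v i` with `f i ≠ g i`. Conjugation by `σ` or `τ` inverts `π = τ * σ`; hence if `τ` fixes `x`, then
`τ (π ^ n x) = π ^ (-n) x` and `σ (π ^ n x) = π ^ (-n - 1) x`. So the `π`-cycle of `x` is closed
under `σ` and `τ`, and with `k` the period of `x`, `π ^ n x` is fixed by `τ` iff `k ∣ 2n` and by `σ`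
iff `k ∣ 2n + 1`: the only other vertex of the cycle fixed by exactly one of them is
`π ^ (k / 2) x`. Using `τ` on that cycle and `σ` elsewhere is a perfect matching of the graph in
which exactly these two deleted/kept statuses are switched, and symmetrically for `g`.
-/

open Function Equiv
open scoped symmDiff

lemma Int.dvd_iff_eq_zero_or_eq_of_nonneg_of_lt {k m : ℤ} (h0 : 0 ≤ m) (h2 : m < 2 * k) :
    k ∣ m ↔ m = 0 ∨ m = k := by
  constructor
  · rintro ⟨c, rfl⟩
    have hc0 : 0 ≤ c := by nlinarith
    have hc2 : c < 2 := by nlinarith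
    interval_cases c <;> simp
  · rintro (rfl | rfl) <;> simp

lemma Int.xor_dvd_two_mul_add_one_dvd_two_mul_iff {k : ℤ} (hk : 2 ≤ k) (n : ℤ) :
    Xor (k ∣ 2 * n + 1) (k ∣ 2 * n) ↔ k ∣ n ∨ k ∣ n - k / 2 := by
  obtain ⟨q, r, hr0, hrk, rfl⟩ : ∃ q r, 0 ≤ r ∧ r < k ∧ n = k * q + r :=
    ⟨n / k, n % k, Int.emod_nonneg _ (by omega), Int.emod_lt_of_pos _ (by omega),
      (Int.mul_ediv_add_emod n k).symm⟩
  have reduce : ∀ c e, k ∣ k * c + e ↔ k ∣ e := fun c e => Int.dvd_self_mul_add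
  rw [show 2 * (k * q + r) + 1 = k * (2 * q) + (2 * r + 1) by ring,
    show 2 * (k * q + r) = k * (2 * q) + 2 * r by ring,
    show k * q + r - k / 2 = k * (q - 1) + (r - k / 2 + k) by ring,
    reduce, reduce, reduce, reduce]
  have hdvd : ∀ m, 0 ≤ m → m < 2 * k → (k ∣ m ↔ m = 0 ∨ m = k) :=
    fun m => Int.dvd_iff_eq_zero_or_eq_of_nonneg_of_lt
  rw [hdvd (2 * r + 1) (by omega) (by omega), hdvd (2 * r) (by omega) (by omega),
    hdvd r (by omega) (by omega), hdvd (r - k / 2 + k) (by omega) (by omega), Xor]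
  omega

namespace Equiv.Perm

variable {W : Type*} {σ τ : Perm W} {x : W}

lemma inv_eq_self_of_involutive (h : Involutive σ) : σ⁻¹ = σ :=
  Involutive.symm_eq_self_of_involutive σ h

lemma mul_inv_of_involutive (hσ : Involutive σ) (hτ : Involutive τ) : (τ * σ)⁻¹ = σ * τ := by
  rw [mul_inv_rev, inv_eq_self_of_involutive hσ, inv_eq_self_of_involutive hτ]

lemma apply_zpow_apply_of_conj_eq_inv {a b : Perm W} (h : a * b * a⁻¹ = b⁻¹) (n : ℤ) (x : W) :
    a ((b ^ n) x) = (b ^ (-n)) (a x) := by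
  have hconj : a * b ^ n * a⁻¹ = b ^ (-n) := by rw [← conj_zpow, h, inv_zpow, zpow_neg]
  rw [← hconj]
  simp [mul_apply]

lemma apply_zpow_mul_apply_eq_zpow_neg (hσ : Involutive σ) (hτ : Involutive τ) (hτx : τ x = x)
    (n : ℤ) :
    τ (((τ * σ) ^ n) x) = ((τ * σ) ^ (-n)) x := by
  have hconj : τ * (τ * σ) * τ⁻¹ = (τ * σ)⁻¹ := by
    rw [mul_inv_of_involutive hσ hτ, inv_eq_self_of_involutive hτ]
    ext w
    simp [mul_apply, hτ _]
  rw [apply_zpow_apply_of_conj_eq_inv hconj, hτx]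

lemma apply_zpow_mul_apply_eq_zpow_neg_sub_one (hσ : Involutive σ) (hτ : Involutive τ)
    (hτx : τ x = x) (n : ℤ) :
    σ (((τ * σ) ^ n) x) = ((τ * σ) ^ (-n - 1)) x := by
  have hconj : σ * (τ * σ) * σ⁻¹ = (τ * σ)⁻¹ := by
    rw [mul_inv_of_involutive hσ hτ, inv_eq_self_of_involutive hσ]
    ext w
    simp [mul_apply, hσ _]
  have hσx : σ x = ((τ * σ) ^ (-1 : ℤ)) x := by
    rw [zpow_neg_one, mul_inv_of_involutive hσ hτ, mul_apply, hτx]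
  rw [apply_zpow_apply_of_conj_eq_inv hconj, hσx, ← mul_apply, ← zpow_add, sub_eq_add_neg]

lemma mapsTo_sameCycle_of_apply_eq_self (hσ : Involutive σ) (hτ : Involutive τ) (hτx : τ x = x) :
    Set.MapsTo σ {w | (τ * σ).SameCycle x w} {w | (τ * σ).SameCycle x w} ∧
      Set.MapsTo τ {w | (τ * σ).SameCycle x w} {w | (τ * σ).SameCycle x w} := by
  constructor <;> rintro _ ⟨n, rfl⟩
  exacts [⟨_, (apply_zpow_mul_apply_eq_zpow_neg_sub_one hσ hτ hτx n).symm⟩,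
    ⟨_, (apply_zpow_mul_apply_eq_zpow_neg hσ hτ hτx n).symm⟩]

variable [Finite W]

theorem sameCycle_inter_symmDiff_fixedPoints_eq_pair_of_apply_eq_self (hσ : Involutive σ)
    (hτ : Involutive τ) (hτx : τ x = x) (hσx : σ x ≠ x) :
    ∃ y ≠ x, {w | (τ * σ).SameCycle x w} ∩ fixedPoints σ ∆ fixedPoints τ = {x, y} := by
  set π := τ * σ
  set k : ℤ := (MulAction.period π x : ℤ)
  have hiter : ∀ m n : ℤ, (π ^ m) x = (π ^ n) x ↔ k ∣ m - n := fun m n => by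
    rw [← smul_left_cancel_iff (π ^ (-n)), ← Perm.smul_def, ← Perm.smul_def, smul_smul, smul_smul,
      ← zpow_add, ← zpow_add, neg_add_cancel, zpow_zero, one_smul,
      MulAction.zpow_smul_eq_iff_period_dvd, neg_add_eq_sub]
  have hk : 2 ≤ k := by
    have hpos : 0 < k := Int.natCast_pos.2 (MulAction.period_pos_of_orderOf_pos (orderOf_pos π) x)
    have hπx : (π ^ (1 : ℤ)) x ≠ (π ^ (0 : ℤ)) x := by
      rw [zpow_one, zpow_zero, one_apply]
      exact fun h => hσx (τ.injective (h.trans hτx.symm))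
    rw [Ne, hiter] at hπx
    by_contra! hk1
    exact hπx (by rw [show k = 1 by omega]; exact one_dvd _)
  have hmem : ∀ n : ℤ, (π ^ n) x ∈ fixedPoints σ ∆ fixedPoints τ ↔
      (π ^ n) x = (π ^ (0 : ℤ)) x ∨ (π ^ n) x = (π ^ (k / 2)) x := fun n => by
    change Xor (σ _ = _) (τ _ = _) ↔ _
    rw [apply_zpow_mul_apply_eq_zpow_neg_sub_one hσ hτ hτx,
      apply_zpow_mul_apply_eq_zpow_neg hσ hτ hτx, hiter, hiter, hiter, hiter, sub_zero,
      show -n - 1 - n = -(2 * n + 1) by ring, show -n - n = -(2 * n) by ring, Int.dvd_neg,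
      Int.dvd_neg,
      Int.xor_dvd_two_mul_add_one_dvd_two_mul_iff hk]
  refine ⟨(π ^ (k / 2)) x, ?_, ?_⟩
  · have h := (hiter (k / 2) 0).not.2 fun hdvd => by
      rw [sub_zero, Int.dvd_iff_eq_zero_or_eq_of_nonneg_of_lt (by omega) (by omega)] at hdvd
      omega
    simpa using h
  · ext w
    constructor
    · rintro ⟨⟨n, rfl⟩, hw⟩
      simpa using (hmem n).1 hw
    · rintro (rfl | rfl)
      · exact ⟨SameCycle.refl _ _, by simpa using (hmem 0).2 (Or.inl rfl)⟩
      · exact ⟨⟨k / 2, rfl⟩, (hmem _).2 (Or.inr rfl)⟩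

theorem sameCycle_inter_symmDiff_fixedPoints_eq_pair (hσ : Involutive σ) (hτ : Involutive τ)
    (hx : x ∈ fixedPoints σ ∆ fixedPoints τ) :
    Set.MapsTo σ {w | (τ * σ).SameCycle x w} {w | (τ * σ).SameCycle x w} ∧
      Set.MapsTo τ {w | (τ * σ).SameCycle x w} {w | (τ * σ).SameCycle x w} ∧
      ∃ y ≠ x, {w | (τ * σ).SameCycle x w} ∩ fixedPoints σ ∆ fixedPoints τ = {x, y} := by
  rcases hx with ⟨hσx, hτx⟩ | ⟨hτx, hσx⟩
  · have hcycle : {w | (σ * τ).SameCycle x w} = {w | (τ * σ).SameCycle x w} := by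
      rw [← mul_inv_of_involutive hσ hτ]
      simp only [sameCycle_inv]
    obtain ⟨hτC, hσC⟩ := mapsTo_sameCycle_of_apply_eq_self hτ hσ hσx
    obtain ⟨y, hyx, hC⟩ :=
      sameCycle_inter_symmDiff_fixedPoints_eq_pair_of_apply_eq_self hτ hσ hσx hτx
    rw [hcycle] at hτC hσC hC
    rw [symmDiff_comm] at hC
    exact ⟨hσC, hτC, y, hyx, hC⟩
  · exact ⟨(mapsTo_sameCycle_of_apply_eq_self hσ hτ hτx).1,
      (mapsTo_sameCycle_of_apply_eq_self hσ hτ hτx).2,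
      sameCycle_inter_symmDiff_fixedPoints_eq_pair_of_apply_eq_self hσ hτ hτx hσx⟩

end Equiv.Perm

section Pairs

variable {α : Type*} {D : Finset α} {ρ : α → α}

def IsPairingOn (ρ : α → α) (S : Set α) : Prop :=
  ∀ x ∈ S, ρ x ∈ S ∧ ρ x ≠ x ∧ ρ (ρ x) = x

lemma IsPairingOn.exists_lift {β : Type*} {ρ : β → β} {S : Set β} (hρ : IsPairingOn ρ S)
    {v : α → β} (hv : Injective v) (hS : S ⊆ Set.range v) :
    ∃ ρ' : α → α, IsPairingOn ρ' (v ⁻¹' S) ∧ ∀ i ∈ v ⁻¹' S, v (ρ' i) = ρ (v i) := by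
  have hlift : ∀ i, ∃ j, i ∈ v ⁻¹' S → v j = ρ (v i) := fun i => by
    by_cases hi : i ∈ v ⁻¹' S
    · obtain ⟨j, hj⟩ := hS (hρ _ hi).1
      exact ⟨j, fun _ => hj⟩
    · exact ⟨i, fun h => absurd h hi⟩
  choose ρ' hρ' using hlift
  refine ⟨ρ', fun i hi => ?_, hρ'⟩
  obtain ⟨hρS, hρne, hρρ⟩ := hρ _ hi
  have hρ'S : ρ' i ∈ v ⁻¹' S := by rw [Set.mem_preimage, hρ' i hi]; exact hρS
  refine ⟨hρ'S, fun h => hρne ?_, hv ?_⟩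
  · rw [← hρ' i hi, h]
  · rw [hρ' _ hρ'S, hρ' i hi, hρρ]

def pairsOf [DecidableEq α] (D : Finset α) (ρ : α → α) : Finset (Finset α) :=
  D.image fun x => {x, ρ x}

lemma pair_eq_pair_of_mem [DecidableEq α] (hρ : IsPairingOn ρ D) {x z : α} (hx : x ∈ D)
    (hz : z ∈ ({x, ρ x} : Finset α)) : ({x, ρ x} : Finset α) = {z, ρ z} := by
  rw [Finset.mem_insert, Finset.mem_singleton] at hz
  rcases hz with rfl | rfl
  · rfl
  · rw [(hρ x hx).2.2, Finset.pair_comm]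

lemma card_of_mem_pairsOf [DecidableEq α] (hρ : IsPairingOn ρ D) {p : Finset α}
    (hp : p ∈ pairsOf D ρ) : p.card = 2 := by
  obtain ⟨x, hx, rfl⟩ := Finset.mem_image.1 hp
  exact Finset.card_pair (hρ x hx).2.1.symm

lemma disjoint_of_mem_pairsOf [DecidableEq α] (hρ : IsPairingOn ρ D) {p q : Finset α}
    (hp : p ∈ pairsOf D ρ) (hq : q ∈ pairsOf D ρ) (hpq : p ≠ q) : Disjoint p q := by
  obtain ⟨x, hx, rfl⟩ := Finset.mem_image.1 hp
  obtain ⟨y, hy, rfl⟩ := Finset.mem_image.1 hq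
  refine Finset.disjoint_left.2 fun z hzx hzy => hpq ?_
  rw [pair_eq_pair_of_mem hρ hx hzx, pair_eq_pair_of_mem hρ hy hzy]

lemma biUnion_pairsOf [DecidableEq α] (hρ : IsPairingOn ρ D) :
    (pairsOf D ρ).biUnion id = D := by
  ext z
  simp only [pairsOf, Finset.mem_biUnion, Finset.mem_image, id, exists_exists_and_eq_and,
    Finset.mem_insert, Finset.mem_singleton]
  constructor
  · rintro ⟨x, hx, rfl | rfl⟩
    exacts [hx, (hρ x hx).1]
  · exact fun hz => ⟨z, hz, Or.inl rfl⟩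

end Pairs

section MatchingInvolution

variable {W : Type*} {G : SimpleGraph W} {s t C : Set W} {m σ τ : W → W}

structure IsMatchingInvolution (G : SimpleGraph W) (s : Set W) (m : W → W) : Prop where
  involutive : Involutive m
  mem_iff_ne : ∀ w, w ∈ s ↔ m w ≠ w
  adj : ∀ w ∈ s, G.Adj w (m w)

lemma IsMatchingInvolution.hasPerfectMatching (h : IsMatchingInvolution G s m) :
    HasPerfectMatching (G.induce s) := by
  have hmem : ∀ w ∈ s, m w ∈ s := fun w hw =>
    (h.mem_iff_ne _).2 fun e => (h.mem_iff_ne w).1 hw (by rw [h.involutive] at e; exact e.symm)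
  refine ⟨{ verts := Set.univ, Adj := fun p q => m p = q, adj_sub := ?_,
            edge_vert := fun _ => trivial, symm := ⟨fun p q (e : m p = q) => ?_⟩ },
    SimpleGraph.Subgraph.isPerfectMatching_iff.2 fun p => ?_⟩
  · intro p q (e : m p = q)
    show G.Adj p q
    rw [← e]
    exact h.adj p p.2
  · show m q = p
    rw [← e, h.involutive]
  · exact ⟨⟨m p, hmem p p.2⟩, rfl, fun q (e : m p = q) => Subtype.ext e.symm⟩

lemma exists_isMatchingInvolution (h : HasPerfectMatching (G.induce s)) :
    ∃ m, IsMatchingInvolution G s m := by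
  classical
  obtain ⟨P, hP⟩ := h
  choose p hp hp_unique using SimpleGraph.Subgraph.isPerfectMatching_iff.1 hP
  have hpp : ∀ w, p (p w) = w := fun w => (hp_unique _ _ (P.adj_symm (hp w))).symm
  refine ⟨fun w => if hw : w ∈ s then p ⟨w, hw⟩ else w, ⟨fun w => ?_, fun w => ?_, fun w hw => ?_⟩⟩
  · by_cases hw : w ∈ s
    · simp [hw, hpp]
    · simp [hw]
  · by_cases hw : w ∈ s
    · have hloop : p ⟨w, hw⟩ ≠ ⟨w, hw⟩ := fun e => P.loopless.irrefl _ (e ▸ hp ⟨w, hw⟩)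
      simpa [hw, Subtype.ext_iff] using hloop
    · simp [hw]
  · simpa [hw] using P.adj_sub (hp ⟨w, hw⟩)

lemma mem_symmDiff_inter_symmDiff_of_mem {w : W} (hw : w ∈ C) :
    w ∈ s ∆ (C ∩ s ∆ t) ↔ w ∈ t := by
  simp only [Set.mem_symmDiff, Set.mem_inter_iff, hw, true_and]
  tauto

lemma mem_symmDiff_inter_symmDiff_of_notMem {w : W} (hw : w ∉ C) :
    w ∈ s ∆ (C ∩ s ∆ t) ↔ w ∈ s := by
  simp [Set.mem_symmDiff, hw]

lemma IsMatchingInvolution.piecewise [DecidablePred (· ∈ C)] (hσ : IsMatchingInvolution G s σ)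
    (hτ : IsMatchingInvolution G t τ) (hCσ : Set.MapsTo σ C C) (hCτ : Set.MapsTo τ C C) :
    IsMatchingInvolution G (s ∆ (C ∩ s ∆ t)) (C.piecewise τ σ) := by
  have hCσ' : ∀ w ∉ C, σ w ∉ C := fun w hw h => hw (hσ.involutive w ▸ hCσ h)
  refine ⟨fun w => ?_, fun w => ?_, fun w => ?_⟩ <;> by_cases hw : w ∈ C
  · simp [hw, hCτ hw, hτ.involutive w]
  · simp [hw, hCσ' w hw, hσ.involutive w]
  · rw [mem_symmDiff_inter_symmDiff_of_mem hw, Set.piecewise_eq_of_mem _ _ _ hw]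
    exact hτ.mem_iff_ne w
  · rw [mem_symmDiff_inter_symmDiff_of_notMem hw, Set.piecewise_eq_of_notMem _ _ _ hw]
    exact hσ.mem_iff_ne w
  · rw [mem_symmDiff_inter_symmDiff_of_mem hw, Set.piecewise_eq_of_mem _ _ _ hw]
    exact hτ.adj w
  · rw [mem_symmDiff_inter_symmDiff_of_notMem hw, Set.piecewise_eq_of_notMem _ _ _ hw]
    exact hσ.adj w

lemma IsMatchingInvolution.compl_fixedPoints (h : IsMatchingInvolution G s m) :
    (fixedPoints m)ᶜ = s :=
  Set.ext fun w => (h.mem_iff_ne w).symm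

theorem exists_pairing_of_hasPerfectMatching [Finite W]
    (hs : HasPerfectMatching (G.induce s)) (ht : HasPerfectMatching (G.induce t)) :
    ∃ ρ : W → W, IsPairingOn ρ (s ∆ t) ∧ ∀ x ∈ s ∆ t,
      HasPerfectMatching (G.induce (s ∆ {x, ρ x})) ∧
      HasPerfectMatching (G.induce (t ∆ {x, ρ x})) := by
  classical
  obtain ⟨σ, hσ⟩ := exists_isMatchingInvolution hs
  obtain ⟨τ, hτ⟩ := exists_isMatchingInvolution ht
  set π := hτ.involutive.toPerm * hσ.involutive.toPerm
  have hD : s ∆ t = fixedPoints σ ∆ fixedPoints τ := by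
    rw [← hσ.compl_fixedPoints, ← hτ.compl_fixedPoints, compl_symmDiff_compl]
  have hcycle : ∀ x, ∃ y, x ∈ s ∆ t → Set.MapsTo σ {w | π.SameCycle x w} {w | π.SameCycle x w} ∧
      Set.MapsTo τ {w | π.SameCycle x w} {w | π.SameCycle x w} ∧
      y ≠ x ∧ {w | π.SameCycle x w} ∩ s ∆ t = {x, y} := fun x => by
    by_cases hx : x ∈ s ∆ t
    · rw [hD] at hx ⊢
      obtain ⟨hσC, hτC, y, hyx, hC⟩ :=
        Perm.sameCycle_inter_symmDiff_fixedPoints_eq_pair (σ := hσ.involutive.toPerm)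
          (τ := hτ.involutive.toPerm) hσ.involutive hτ.involutive hx
      exact ⟨y, fun _ => ⟨hσC, hτC, hyx, hC⟩⟩
    · exact ⟨x, fun h => absurd h hx⟩
  choose ρ hρ using hcycle
  have hρC : ∀ x ∈ s ∆ t, ρ x ∈ {w | π.SameCycle x w} ∩ s ∆ t := fun x hx =>
    (hρ x hx).2.2.2 ▸ Or.inr rfl
  refine ⟨ρ, fun x hx => ⟨(hρC x hx).2, (hρ x hx).2.2.1, ?_⟩, fun x hx => ?_⟩
  · obtain ⟨-, -, -, hC⟩ := hρ x hx
    obtain ⟨-, -, hρρx, hC'⟩ := hρ (ρ x) (hρC x hx).2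
    have hsame : {w | π.SameCycle (ρ x) w} = {w | π.SameCycle x w} :=
      Set.ext fun w => ⟨(hρC x hx).1.trans, (hρC x hx).1.symm.trans⟩
    have hmem : ρ (ρ x) ∈ ({x, ρ x} : Set W) := by
      rw [← hC, ← hsame, hC']
      exact Or.inr rfl
    exact hmem.resolve_right hρρx
  · obtain ⟨hσC, hτC, -, hC⟩ := hρ x hx
    have hτσ := (hτ.piecewise hσ hτC hσC).hasPerfectMatching
    rw [symmDiff_comm t s] at hτσ
    rw [← hC]
    exact ⟨(hσ.piecewise hτ hσC hτC).hasPerfectMatching, hτσ⟩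

end MatchingInvolution

section KeptVertices

variable {α W : Type*} {v : α → W}

def keptVertices (v : α → W) (T : α → Bool) : Set W :=
  {w | ∀ i, v i = w → T i = false}

lemma apply_mem_keptVertices_iff (hv : Injective v) {T : α → Bool} {i : α} :
    v i ∈ keptVertices v T ↔ T i = false :=
  ⟨fun h => h i rfl, fun h _ hj => hv hj ▸ h⟩

lemma mem_keptVertices_of_notMem_range {w : W} (hw : w ∉ Set.range v) (T : α → Bool) :
    w ∈ keptVertices v T :=
  fun i hi => absurd ⟨i, hi⟩ hw

lemma symmDiff_keptVertices_subset_range (T T' : α → Bool) :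
    keptVertices v T ∆ keptVertices v T' ⊆ Set.range v := by
  intro w hw
  by_contra hr
  simp [Set.mem_symmDiff, mem_keptVertices_of_notMem_range hr] at hw

lemma apply_mem_symmDiff_keptVertices_iff (hv : Injective v) {T T' : α → Bool} {i : α} :
    v i ∈ keptVertices v T ∆ keptVertices v T' ↔ T i ≠ T' i := by
  rw [Set.mem_symmDiff, apply_mem_keptVertices_iff hv, apply_mem_keptVertices_iff hv]
  cases T i <;> cases T' i <;> simp

lemma keptVertices_flipS [DecidableEq α] (hv : Injective v) (T : α → Bool) (S : Finset α) :
    keptVertices v (flipS T S) = keptVertices v T ∆ (v '' S) := by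
  ext w
  by_cases hw : w ∈ Set.range v
  · obtain ⟨i, rfl⟩ := hw
    rw [Set.mem_symmDiff, apply_mem_keptVertices_iff hv, apply_mem_keptVertices_iff hv,
      hv.mem_set_image, flipS]
    by_cases hi : i ∈ S <;> simp [hi]
  · have hS : w ∉ v '' S := fun ⟨i, _, hi⟩ => hw ⟨i, hi⟩
    simp [Set.mem_symmDiff, mem_keptVertices_of_notMem_range hw, hS]

end KeptVertices

theorem matchingRealizable_pairs_general {a : ℕ} (M : Set (Fin a → Bool))
    (hMR : MatchingRealizable M)
    (f g : Fin a → Bool) (hf : f ∈ M) (hg : g ∈ M) :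
    ∃ P : Finset (Finset (Fin a)),
      (∀ p ∈ P, p.card = 2) ∧
      (∀ p ∈ P, ∀ q ∈ P, p ≠ q → Disjoint p q) ∧
      (P.biUnion id = Finset.univ.filter fun v => f v ≠ g v) ∧
      (∀ p ∈ P, flipS f p ∈ M ∧ flipS g p ∈ M) := by
  obtain ⟨W, _, G, v, hv, hM⟩ := hMR
  have hM' : ∀ T, T ∈ M ↔ HasPerfectMatching (G.induce (keptVertices v T)) := hM
  obtain ⟨ρ, hρ, hflip⟩ := exists_pairing_of_hasPerfectMatching ((hM' f).1 hf) ((hM' g).1 hg)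
  obtain ⟨ρ', hρ', hρ'v⟩ := hρ.exists_lift hv (symmDiff_keptVertices_subset_range f g)
  set D := Finset.univ.filter fun i => f i ≠ g i
  have hD : (D : Set (Fin a)) = v ⁻¹' (keptVertices v f ∆ keptVertices v g) := by
    ext i
    rw [Set.mem_preimage, apply_mem_symmDiff_keptVertices_iff hv]
    simp [D]
  rw [← hD] at hρ' hρ'v
  refine ⟨pairsOf D ρ', fun p => card_of_mem_pairsOf hρ',
    fun p hp q hq => disjoint_of_mem_pairsOf hρ' hp hq, biUnion_pairsOf hρ', fun p hp => ?_⟩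
  obtain ⟨i, hi, rfl⟩ := Finset.mem_image.1 hp
  rw [hM', hM', keptVertices_flipS hv, keptVertices_flipS hv, Finset.coe_pair, Set.image_pair,
    hρ'v i hi]
  exact hflip _ (by rw [← Set.mem_preimage, ← hD]; exact hi)

/-- If `M` is a matching realizable even Δ-matroid and `f, g ∈ M`, then the set of
coordinates where `f` and `g` differ can be partitioned into two-element sets `P₁,…,P_k`
with `f ⊕ Pᵢ ∈ M` and `g ⊕ Pᵢ ∈ M` for each `i`. -/
theorem matchingRealizable_pairs {a : ℕ} (M : Set (Fin a → Bool))
    (hM : IsEvenDeltaMatroid M) (hMR : MatchingRealizable M)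
    (f g : Fin a → Bool) (hf : f ∈ M) (hg : g ∈ M) :
    ∃ P : Finset (Finset (Fin a)),
      (∀ p ∈ P, p.card = 2) ∧
      (∀ p ∈ P, ∀ q ∈ P, p ≠ q → Disjoint p q) ∧
      (P.biUnion id = Finset.univ.filter fun v => f v ≠ g v) ∧
      (∀ p ∈ P, flipS f p ∈ M ∧ flipS g p ∈ M) :=
  matchingRealizable_pairs_general M hMR f g hf hg
end

section
/- Let M ⊆ {0,1}^6 be the set consisting of the nineteen tuples 000000; 100100, 011000, 001100, 001010, 000101, 001001, 010001, 100010; 011011, 100111, 110011, 110101, 111010, 001111, 101101, 101011, 111100; and 111111. Then M is an even Δ-matroid, and for f = 000000 and g = 111111 there is no partition of the six coordinates into two-element sets P₁, P₂, P₃ such that f ⊕ P_i ∈ M and g ⊕ P_i ∈ M for all i = 1, 2, 3. -/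
/-- The nineteen-tuple relation of arity 6 from the appendix. -/
def M19 : Set (Fin 6 → Bool) :=
  {![false, false, false, false, false, false],
   ![true, false, false, true, false, false],
   ![false, true, true, false, false, false],
   ![false, false, true, true, false, false],
   ![false, false, true, false, true, false],
   ![false, false, false, true, false, true],
   ![false, false, true, false, false, true],
   ![false, true, false, false, false, true],
   ![true, false, false, false, true, false],
   ![false, true, true, false, true, true],
   ![true, false, false, true, true, true],
   ![true, true, false, false, true, true],
   ![true, true, false, true, false, true],
   ![true, true, true, false, true, false],
   ![false, false, true, true, true, true],
   ![true, false, true, true, false, true],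
   ![true, false, true, false, true, true],
   ![true, true, true, true, false, false],
   ![true, true, true, true, true, true]}

/-!
Membership, parity and the exchange axiom are finite checks over `{0,1}^6`. For the pairing
claim: a two-element set `P` has both `0 ⊕ P` and `1 ⊕ P` in `M19` only for
`P ∈ {{0,3}, {1,2}, {2,3}, {2,4}, {3,5}}`. So in a partition into such pairs the blocks of `1`
and of `4` are `{1,2}` and `{2,4}`; both contain `2`, hence they are the same block — impossible.
-/

open Function

instance (α : Fin 6 → Bool) : Decidable (α ∈ M19) := by unfold M19; infer_instance

theorem numOnes_mod_two_of_mem_M19 : ∀ α ∈ M19, numOnes α % 2 = 0 := by decide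

theorem isEvenDeltaMatroid_M19 : IsEvenDeltaMatroid M19 := by
  refine ⟨⟨⟨fun _ => false, by decide⟩, by decide +kernel⟩, fun α hα β hβ => ?_⟩
  rw [numOnes_mod_two_of_mem_M19 α hα, numOnes_mod_two_of_mem_M19 β hβ]

def IsCommonPair {V : Type*} [DecidableEq V] (M : Set (V → Bool)) (f g : V → Bool)
    (P : Finset V) : Prop :=
  P.card = 2 ∧ flipS f P ∈ M ∧ flipS g P ∈ M

theorem isCommonPair_M19_iff (P : Finset (Fin 6)) :
    IsCommonPair M19 (fun _ => false) (fun _ => true) P ↔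
      P = {0, 3} ∨ P = {1, 2} ∨ P = {2, 3} ∨ P = {2, 4} ∨ P = {3, 5} := by
  revert P
  unfold IsCommonPair
  decide

theorem IsCommonPair.M19_eq_of_mem {P : Finset (Fin 6)}
    (h : IsCommonPair M19 (fun _ => false) (fun _ => true) P) :
    (1 ∈ P → P = {1, 2}) ∧ (4 ∈ P → P = {2, 4}) := by
  rcases (isCommonPair_M19_iff P).1 h with rfl | rfl | rfl | rfl | rfl <;> decide

theorem Pairwise.eq_of_mem_of_mem {ι α : Type*} {P : ι → Finset α}
    (hP : Pairwise (Disjoint on P)) {a : α} {i j : ι} (hi : a ∈ P i) (hj : a ∈ P j) : i = j :=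
  by_contra fun hij => Finset.disjoint_left.mp (hP hij) hi hj

theorem M19_not_partition_into_common_pairs {ι : Type*} {P : ι → Finset (Fin 6)}
    (hpair : ∀ i, IsCommonPair M19 (fun _ => false) (fun _ => true) (P i))
    (hdisj : Pairwise (Disjoint on P)) (hcover : ∀ x, ∃ i, x ∈ P i) : False := by
  obtain ⟨i, hi⟩ := hcover 1
  obtain ⟨j, hj⟩ := hcover 4
  have hPi : P i = {1, 2} := (hpair i).M19_eq_of_mem.1 hi
  have hPj : P j = {2, 4} := (hpair j).M19_eq_of_mem.2 hj
  obtain rfl : i = j := hdisj.eq_of_mem_of_mem (a := 2) (by simp [hPi]) (by simp [hPj])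
  exact absurd (hPi.symm.trans hPj) (by decide)

/-- `M19` is an even Δ-matroid, but for `f = 000000` and `g = 111111` there is no
partition of the six coordinates into two-element sets `P₁, P₂, P₃` with
`f ⊕ Pᵢ ∈ M19` and `g ⊕ Pᵢ ∈ M19` for all `i`. -/
theorem M19_evenDeltaMatroid_no_pairing :
    IsEvenDeltaMatroid M19 ∧
    ¬ ∃ P₁ P₂ P₃ : Finset (Fin 6),
        P₁.card = 2 ∧ P₂.card = 2 ∧ P₃.card = 2 ∧
        Disjoint P₁ P₂ ∧ Disjoint P₁ P₃ ∧ Disjoint P₂ P₃ ∧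
        P₁ ∪ P₂ ∪ P₃ = Finset.univ ∧
        (flipS (fun _ => false) P₁ ∈ M19 ∧ flipS (fun _ => true) P₁ ∈ M19) ∧
        (flipS (fun _ => false) P₂ ∈ M19 ∧ flipS (fun _ => true) P₂ ∈ M19) ∧
        (flipS (fun _ => false) P₃ ∈ M19 ∧ flipS (fun _ => true) P₃ ∈ M19) := by
  refine ⟨isEvenDeltaMatroid_M19, ?_⟩
  rintro ⟨P₁, P₂, P₃, c₁, c₂, c₃, d₁₂, d₁₃, d₂₃, hunion, h₁, h₂, h₃⟩
  apply M19_not_partition_into_common_pairs (P := ![P₁, P₂, P₃])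
  · simp [Fin.forall_fin_succ, IsCommonPair, *]
  · simp [pairwise_fin_succ_iff_of_isSymm, Fin.forall_fin_succ, onFun, *]
  · intro x
    have hx : x ∈ P₁ ∪ P₂ ∪ P₃ := hunion ▸ Finset.mem_univ x
    simpa [Fin.exists_fin_succ, or_assoc] using hx
end

section
/- There exists an even Δ-matroid M ⊆ {0,1}^6 of arity 6 that is not matching realizable. -/
/-!
Let `G` realize `R` with terminals `v i`, and let `R` contain both constant tuples. A perfect
matching `φ` of `G` and a perfect matching `ψ` of `G` minus all terminals are involutions of the
vertex set; `φ` has no fixed point and the fixed points of `ψ` are the terminals. On the cycle of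
`g = φ ψ` through a terminal `x`, `ψ` and `φ` act as the reflections `i ↦ -i` and `i ↦ 1 - i` (this
cycle is the alternating path of `φ ∪ ψ` starting at `x`). Hence it has even length `2n` and contains
exactly one other terminal, `gⁿ x`. This pairs up the terminals, and using `ψ` instead of `φ` on the
cycles through any union of pairs gives a perfect matching of `G` minus those terminals, so `R`
contains every tuple that is constant on the pairs. The even Δ-matroid `counterexample` contains
both constant tuples, but for each of the 15 pairings of the six coordinates it misses a tuple that
is constant on the pairs.
-/

open Function Equiv

theorem semiconjBy_mul_inv_of_inv_eq_self {G : Type*} [Group G] {a b : G} (ha : a⁻¹ = a)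
    (hb : b⁻¹ = b) : SemiconjBy b (a * b) (a * b)⁻¹ := by
  rw [SemiconjBy, mul_inv_rev, ha, hb, mul_assoc]

theorem Function.Involutive.piecewise {W : Type*} {f g : W → W} (hf : Involutive f)
    (hg : Involutive g) {s : Set W} [∀ x, Decidable (x ∈ s)] (hfs : Set.MapsTo f s s)
    (hgs : Set.MapsTo g s s) : Involutive (s.piecewise f g) := by
  intro x
  by_cases hx : x ∈ s
  · rw [Set.piecewise_eq_of_mem _ _ _ hx, Set.piecewise_eq_of_mem _ _ _ (hfs hx), hf]
  · have hgx : g x ∉ s := fun h => hx (hg x ▸ hgs h)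
    rw [Set.piecewise_eq_of_notMem _ _ _ hx, Set.piecewise_eq_of_notMem _ _ _ hgx, hg]

namespace Equiv.Perm

variable {W : Type*}

theorem zpow_apply_eq_zpow_apply_iff_modEq (g : Perm W) (x : W) {i j : ℤ} :
    (g ^ i) x = (g ^ j) x ↔ i ≡ j [ZMOD MulAction.period g x] := by
  rw [Int.modEq_iff_dvd, ← MulAction.zpow_smul_eq_iff_period_dvd, sub_eq_neg_add, zpow_add,
    mul_smul, zpow_neg, inv_smul_eq_iff, Perm.smul_def, Perm.smul_def, eq_comm]

theorem apply_zpow_mul_apply_of_apply_eq_self {φ ψ : Perm W} (hφ : Involutive φ)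
    (hψ : Involutive ψ) {x : W} (hx : ψ x = x) (i : ℤ) :
    ψ (((φ * ψ) ^ i) x) = ((φ * ψ) ^ (-i)) x := by
  have h := (semiconjBy_mul_inv_of_inv_eq_self (hφ.symm_eq_self_of_involutive φ)
    (hψ.symm_eq_self_of_involutive ψ)).zpow_right i
  rw [inv_zpow', SemiconjBy] at h
  simpa [hx] using congr($h x)

theorem exists_ne_sameCycle_fixed_eq_pair [Finite W] {φ ψ : Perm W} (hφ : Involutive φ)
    (hψ : Involutive ψ) (hφ_ne : ∀ x, φ x ≠ x) {x : W} (hx : ψ x = x) :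
    ∃ y ≠ x, {z | (φ * ψ).SameCycle x z ∧ ψ z = z} = {x, y} := by
  set g := φ * ψ
  have hψg : ∀ i : ℤ, ψ ((g ^ i) x) = (g ^ (-i)) x :=
    apply_zpow_mul_apply_of_apply_eq_self hφ hψ hx
  have hmod : ∀ i j : ℤ, (g ^ i) x = (g ^ j) x ↔ i ≡ j [ZMOD MulAction.period g x] :=
    fun _ _ => zpow_apply_eq_zpow_apply_iff_modEq g x
  have hfix : ∀ i : ℤ, (g ^ i) x = x ↔ i ≡ 0 [ZMOD MulAction.period g x] :=
    fun i => by simpa using hmod i 0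
  have hpos : 0 < MulAction.period g x := MulAction.period_pos_of_orderOf_pos (orderOf_pos g) x
  -- `φ = g ψ` acts on the cycle of `x` as `i ↦ 1 - i`, which has a fixed point if the cycle is odd.
  obtain ⟨n, hn⟩ : Even (MulAction.period g x) := by
    by_contra hodd
    obtain ⟨t, ht⟩ := Nat.not_even_iff_odd.mp hodd
    apply hφ_ne ((g ^ ((t : ℤ) + 1)) x)
    have hφg : φ ((g ^ ((t : ℤ) + 1)) x) = g (ψ ((g ^ ((t : ℤ) + 1)) x)) := by
      rw [Perm.mul_apply, hψ]
    rw [hφg, hψg, ← mul_apply, ← zpow_one_add, hmod, Int.modEq_iff_dvd, ht]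
    exact ⟨1, by push_cast; ring⟩
  rw [hn] at hmod hfix hpos
  refine ⟨(g ^ (n : ℤ)) x, fun h => ?_, ?_⟩
  · rw [hfix, Int.modEq_iff_dvd, zero_sub, Int.dvd_neg] at h
    have := Int.le_of_dvd (by omega) h
    omega
  ext z
  simp only [Set.mem_insert_iff, Set.mem_singleton_iff]
  constructor
  · rintro ⟨⟨j, rfl⟩, hz⟩
    rw [hψg, hmod, Int.modEq_iff_dvd] at hz
    obtain ⟨k, rfl⟩ : (n : ℤ) ∣ j := by
      obtain ⟨c, hc⟩ := hz
      exact ⟨c, by push_cast at hc; linarith⟩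
    rcases Int.even_or_odd k with ⟨l, rfl⟩ | ⟨l, rfl⟩
    · left
      rw [hfix, Int.modEq_iff_dvd]
      exact ⟨-l, by push_cast; ring⟩
    · right
      rw [hmod, Int.modEq_iff_dvd]
      exact ⟨-l, by push_cast; ring⟩
  · rintro (rfl | rfl)
    · exact ⟨SameCycle.rfl, hx⟩
    · refine ⟨⟨n, rfl⟩, ?_⟩
      rw [hψg, hmod, Int.modEq_iff_dvd]
      exact ⟨1, by push_cast; ring⟩

theorem SameCycle.apply_right_of_apply_eq_self {φ ψ : Perm W} (hφ : Involutive φ)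
    (hψ : Involutive ψ) {x z : W} (hx : ψ x = x) (hz : (φ * ψ).SameCycle x z) :
    (φ * ψ).SameCycle x (ψ z) ∧ (φ * ψ).SameCycle x (φ z) := by
  have hψz : (φ * ψ).SameCycle x (ψ z) := by
    obtain ⟨j, rfl⟩ := hz
    exact ⟨-j, (apply_zpow_mul_apply_of_apply_eq_self hφ hψ hx j).symm⟩
  have hφz : φ z = (φ * ψ) (ψ z) := by rw [mul_apply, hψ]
  exact ⟨hψz, hφz ▸ sameCycle_apply_right.2 hψz⟩

theorem exists_pairing_of_fixed_eq_range [Finite W] {ι : Type*} {φ ψ : Perm W}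
    (hφ : Involutive φ) (hψ : Involutive ψ) (hφ_ne : ∀ x, φ x ≠ x) {v : ι → W}
    (hv : Injective v) (hψ_fix : ∀ x, ψ x = x ↔ x ∈ Set.range v) :
    ∃ σ : Perm ι, Involutive σ ∧ (∀ i, σ i ≠ i) ∧
      ∀ i, {z | (φ * ψ).SameCycle (v i) z ∧ ψ z = z} = {v i, v (σ i)} := by
  have hpair : ∀ i, ∃ j ≠ i, {z | (φ * ψ).SameCycle (v i) z ∧ ψ z = z} = {v i, v j} := by
    intro i
    obtain ⟨y, hne, hy⟩ :=
      exists_ne_sameCycle_fixed_eq_pair hφ hψ hφ_ne ((hψ_fix (v i)).2 ⟨i, rfl⟩)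
    have hy_mem : y ∈ {z | (φ * ψ).SameCycle (v i) z ∧ ψ z = z} := by simp [hy]
    obtain ⟨j, rfl⟩ := (hψ_fix y).1 hy_mem.2
    exact ⟨j, fun h => hne (h ▸ rfl), hy⟩
  choose τ hτ_ne hτ using hpair
  have hτ_inv : Involutive τ := by
    intro i
    have hsame : (φ * ψ).SameCycle (v i) (v (τ i)) := by
      have hmem : v (τ i) ∈ {z | (φ * ψ).SameCycle (v i) z ∧ ψ z = z} := by simp [hτ i]
      exact hmem.1
    have hcycle : {z | (φ * ψ).SameCycle (v (τ i)) z ∧ ψ z = z} =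
        {z | (φ * ψ).SameCycle (v i) z ∧ ψ z = z} := by
      ext z
      exact ⟨fun h => ⟨hsame.trans h.1, h.2⟩, fun h => ⟨hsame.symm.trans h.1, h.2⟩⟩
    have hmem : v (τ (τ i)) ∈ ({v (τ i), v (τ (τ i))} : Set W) := by simp
    rw [← hτ, hcycle, hτ, Set.mem_insert_iff, Set.mem_singleton_iff, hv.eq_iff, hv.eq_iff] at hmem
    exact hmem.resolve_right (hτ_ne _)
  exact ⟨hτ_inv.toPerm τ, hτ_inv, hτ_ne, hτ⟩

theorem exists_pairing_forall_invariant_exists_involutive [Finite W] {ι : Type*}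
    {φ ψ : Perm W} (hφ : Involutive φ) (hψ : Involutive ψ) (hφ_ne : ∀ x, φ x ≠ x) {v : ι → W}
    (hv : Injective v) (hψ_fix : ∀ x, ψ x = x ↔ x ∈ Set.range v) :
    ∃ σ : Perm ι, Involutive σ ∧ (∀ i, σ i ≠ i) ∧ ∀ T : ι → Bool, (∀ i, T (σ i) = T i) →
      ∃ χ : Perm W, Involutive χ ∧ (∀ x, χ x = φ x ∨ χ x = ψ x) ∧
        ∀ x, χ x = x ↔ ∃ i, v i = x ∧ T i = true := by
  classical
  obtain ⟨σ, hσ, hσ_ne, hσ_pair⟩ := exists_pairing_of_fixed_eq_range hφ hψ hφ_ne hv hψ_fix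
  refine ⟨σ, hσ, hσ_ne, fun T hT => ?_⟩
  have hv_fix : ∀ i, ψ (v i) = v i := fun i => (hψ_fix _).2 ⟨i, rfl⟩
  set s : Set W := {z | ∃ i, T i = true ∧ (φ * ψ).SameCycle (v i) z}
  have hψs : Set.MapsTo ψ s s := fun _ ⟨i, hi, hz⟩ =>
    ⟨i, hi, (SameCycle.apply_right_of_apply_eq_self hφ hψ (hv_fix i) hz).1⟩
  have hφs : Set.MapsTo φ s s := fun _ ⟨i, hi, hz⟩ =>
    ⟨i, hi, (SameCycle.apply_right_of_apply_eq_self hφ hψ (hv_fix i) hz).2⟩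
  have hχ := hψ.piecewise hφ hψs hφs
  have hχ_fix : ∀ x, s.piecewise ψ φ x = x ↔ x ∈ s ∧ ψ x = x := fun x => by
    by_cases hx : x ∈ s <;> simp [hx, hφ_ne]
  refine ⟨hχ.toPerm _, hχ, fun x => ?_, fun x => ?_⟩
  · by_cases hx : x ∈ s <;> simp [hx]
  rw [Involutive.coe_toPerm, hχ_fix]
  constructor
  · rintro ⟨⟨i, hi, hx⟩, hψx⟩
    have hmem : x ∈ {z | (φ * ψ).SameCycle (v i) z ∧ ψ z = z} := ⟨hx, hψx⟩
    rw [hσ_pair i] at hmem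
    rcases hmem with rfl | rfl
    · exact ⟨i, rfl, hi⟩
    · exact ⟨σ i, rfl, (hT i).trans hi⟩
  · rintro ⟨i, rfl, hi⟩
    exact ⟨⟨i, hi, SameCycle.rfl⟩, hv_fix i⟩

end Equiv.Perm

theorem hasPerfectMatching_induce_iff {W : Type*} {G : SimpleGraph W} (s : Set W) :
    HasPerfectMatching (G.induce s) ↔
      ∃ f : Perm W, Involutive f ∧ (∀ x, f x ≠ x → G.Adj x (f x)) ∧ ∀ x, x ∈ s ↔ f x ≠ x := by
  classical
  constructor
  · rintro ⟨P, hP⟩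
    choose p hp hp_uniq using fun v => show ∃ w, P.Adj v w ∧ ∀ y, P.Adj v y → y = w from
      SimpleGraph.Subgraph.isPerfectMatching_iff.1 hP v
    have hp_inv : Involutive p := fun u => (hp_uniq _ _ (hp u).symm).symm
    have hq : hp_inv.toPerm p * hp_inv.toPerm p = 1 := Equiv.ext hp_inv
    refine ⟨Perm.ofSubtype (hp_inv.toPerm p), fun x => ?_, fun x hx => ?_, fun x => ?_⟩
    · rw [← Perm.mul_apply, ← map_mul, hq, map_one, Perm.one_apply]
    · by_cases hxs : x ∈ s
      · rw [Perm.ofSubtype_apply_of_mem _ hxs]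
        exact P.adj_sub (hp ⟨x, hxs⟩)
      · exact absurd (Perm.ofSubtype_apply_of_not_mem _ hxs) hx
    · by_cases hxs : x ∈ s
      · rw [Perm.ofSubtype_apply_of_mem _ hxs]
        exact iff_of_true hxs fun h => (P.adj_sub (hp ⟨x, hxs⟩)).ne (Subtype.ext h.symm)
      · rw [Perm.ofSubtype_apply_of_not_mem _ hxs]
        exact iff_of_false hxs (not_not.2 rfl)
  · rintro ⟨f, hf, hf_adj, hs⟩
    have hfs : ∀ x : s, f x ∈ s := fun x => (hs _).2 fun h => (hs x).1 x.2 (by rw [← h, hf])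
    refine ⟨⟨Set.univ, fun x y => f x = y, ?_, fun _ => trivial, ?_⟩, ?_, fun _ => trivial⟩
    · rintro x y (h : f x = y)
      show G.Adj x y
      rw [← h]
      exact hf_adj x ((hs x).1 x.2)
    · refine ⟨?_⟩
      rintro x y (h : f x = y)
      show f y = x
      rw [← h, hf]
    · intro x _
      exact ⟨⟨f x, hfs x⟩, rfl, fun y (hy : f x = y) => Subtype.ext hy.symm⟩

theorem MatchingRealizable.exists_pairing {a : ℕ} {R : Set (Fin a → Bool)}
    (hR : MatchingRealizable R) (h0 : (fun _ => false) ∈ R) (h1 : (fun _ => true) ∈ R) :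
    ∃ σ : Perm (Fin a), Involutive σ ∧ (∀ i, σ i ≠ i) ∧
      ∀ T : Fin a → Bool, (∀ i, T (σ i) = T i) → T ∈ R := by
  obtain ⟨W, _, G, v, hv, hR⟩ := hR
  obtain ⟨φ, hφ, hφ_adj, hφ_ne⟩ := (hasPerfectMatching_induce_iff _).1 ((hR _).1 h0)
  obtain ⟨ψ, hψ, hψ_adj, hψ_fix⟩ := (hasPerfectMatching_induce_iff _).1 ((hR _).1 h1)
  obtain ⟨σ, hσ, hσ_ne, hσ_switch⟩ :=
    Perm.exists_pairing_forall_invariant_exists_involutive hφ hψ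
      (fun x => (hφ_ne x).1 fun _ _ => rfl) hv
      (fun x => by simpa using (hψ_fix x).not.symm)
  refine ⟨σ, hσ, hσ_ne, fun T hT => ?_⟩
  obtain ⟨χ, hχ, hχ_mix, hχ_fix⟩ := hσ_switch T hT
  refine (hR T).2 ((hasPerfectMatching_induce_iff _).2 ⟨χ, hχ, fun x hx => ?_, fun x => ?_⟩)
  · rcases hχ_mix x with h | h <;> rw [h] at hx ⊢
    exacts [hφ_adj x hx, hψ_adj x hx]
  · rw [Ne, hχ_fix]
    simp

-- `Nat.ofBits` is little-endian: bit `i` of the code of `α` is `α i`.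
def counterexampleCodes : List ℕ :=
  [0, 3, 5, 6, 17, 18, 20, 24, 27, 29, 30, 33, 34, 39, 40, 43, 45, 46, 48, 51, 53, 54, 60, 63]

def counterexample : Set (Fin 6 → Bool) :=
  {α | Nat.ofBits α ∈ counterexampleCodes}

instance : DecidablePred (· ∈ counterexample) := fun α =>
  inferInstanceAs (Decidable (Nat.ofBits α ∈ counterexampleCodes))

set_option maxRecDepth 100000 in
theorem counterexample_isEvenDeltaMatroid : IsEvenDeltaMatroid counterexample := by
  refine ⟨⟨⟨fun _ => false, by decide⟩, ?_⟩, ?_⟩ <;> decide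

set_option maxRecDepth 100000 in
theorem counterexample_not_pairing : ¬ ∃ σ : Perm (Fin 6), Involutive σ ∧ (∀ i, σ i ≠ i) ∧
    ∀ T : Fin 6 → Bool, (∀ i, T (σ i) = T i) → T ∈ counterexample := by
  unfold Involutive
  decide

/-- There exists an even Δ-matroid of arity 6 that is not matching realizable. -/
theorem exists_evenDeltaMatroid_not_matchingRealizable :
    ∃ M : Set (Fin 6 → Bool), IsEvenDeltaMatroid M ∧ ¬ MatchingRealizable M :=
  ⟨counterexample, counterexample_isEvenDeltaMatroid, fun h =>
    counterexample_not_pairing (h.exists_pairing (by decide) (by decide))⟩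
end

section
/- Let V be a finite set, let F : {0,1}^V → {0, 1, …, |V|} be a generalized counting function, let S ⊆ {0, 1, …, |V|} be 2-gap free, and assume the set M = {α ∈ {0,1}^V : F(α) ∈ S} is nonempty. Then M is a Δ-matroid. -/
/-- `F` is a generalized counting function on `{0,1}^V`: it takes values in
`{0, …, |V|}`, changes by exactly `±1` under flipping a single coordinate, and whenever
`F α > F β` there are coordinates `u, v ∈ α △ β` with `F (α ⊕ u) = F α − 1` and
`F (β ⊕ v) = F β + 1`. -/
def IsGCFunction {V : Type*} [Fintype V] [DecidableEq V] (F : (V → Bool) → ℕ) : Prop :=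
  (∀ α, F α ≤ Fintype.card V) ∧
  (∀ α (v : V), F (flip1 α v) = F α + 1 ∨ F (flip1 α v) + 1 = F α) ∧
  (∀ α β, F β < F α → ∃ u v, α u ≠ β u ∧ α v ≠ β v ∧
    F (flip1 α u) + 1 = F α ∧ F (flip1 β v) = F β + 1)

/-- `S` is 2-gap free: any `x ∉ S` with `min S < x < max S` has both `x + 1 ∈ S` and
`x − 1 ∈ S`. -/
def TwoGapFree (S : Finset ℕ) : Prop :=
  ∀ x, x ∉ S → (∃ a ∈ S, a < x) → (∃ b ∈ S, x < b) → (x + 1 ∈ S ∧ x - 1 ∈ S)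

/-! If `α ⊕ v ∉ M = F⁻¹(S)`, its value `x = F(α ⊕ v)` is adjacent to `F α ∈ S`. Say `x < F β`.
The gc-property for `β` and `α ⊕ v` flips one more coordinate of `(α ⊕ v) △ β` so as to raise `F`
to `x + 1`, and `x + 1 ∈ S`: either `S` has elements on both sides of `x`, and 2-gap freeness
applies, or `x` lies below `S` and `x + 1 = F α`. The case `x > F β` is symmetric. -/

section Flip

variable {V : Type*} [DecidableEq V]

lemma flip1_apply_self (α : V → Bool) (v : V) : flip1 α v v = !α v := by
  simp [flip1, flipS]

lemma flip1_apply_of_ne (α : V → Bool) {v w : V} (h : w ≠ v) : flip1 α v w = α w := by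
  simp [flip1, flipS, h]

lemma flipS_pair_self (α : V → Bool) (v : V) : flipS α {v, v} = flip1 α v := by
  rw [Finset.pair_eq_singleton, flip1]

lemma flipS_pair (α : V → Bool) {u v : V} (h : u ≠ v) :
    flipS α {u, v} = flip1 (flip1 α v) u := by
  funext w
  by_cases hu : w = u
  · subst hu
    simp [flipS, flip1, h]
  · by_cases hv : w = v <;> simp [flipS, flip1, hu, hv, h.symm]

lemma isDeltaMatroid_of_flip1 {M : Set (V → Bool)} (hne : M.Nonempty)
    (h : ∀ α ∈ M, ∀ β ∈ M, ∀ v, α v ≠ β v →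
      flip1 α v ∈ M ∨ ∃ u, flip1 α v u ≠ β u ∧ flip1 (flip1 α v) u ∈ M) :
    IsDeltaMatroid M := by
  refine ⟨hne, fun α hα β hβ v hv => ?_⟩
  rcases h α hα β hβ v hv with hflip | ⟨u, hu, hmem⟩
  · exact ⟨v, hv, by rwa [flipS_pair_self]⟩
  · have huv : u ≠ v := by
      rintro rfl
      exact hu (by rw [flip1_apply_self]; exact (Bool.eq_not_iff.mpr hv.symm).symm)
    exact ⟨u, by rwa [flip1_apply_of_ne α huv] at hu, by rwa [flipS_pair α huv]⟩

end Flip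

namespace IsGCFunction

variable {V : Type*} [Fintype V] [DecidableEq V] {F : (V → Bool) → ℕ}

lemma apply_flip1 (hF : IsGCFunction F) (α : V → Bool) (v : V) :
    F (flip1 α v) = F α + 1 ∨ F (flip1 α v) + 1 = F α :=
  hF.2.1 α v

lemma exists_apply_flip1_eq_succ (hF : IsGCFunction F) {γ β : V → Bool} (h : F γ < F β) :
    ∃ u, γ u ≠ β u ∧ F (flip1 γ u) = F γ + 1 := by
  obtain ⟨-, u, -, hu, -, hFu⟩ := hF.2.2 β γ h
  exact ⟨u, hu.symm, hFu⟩

lemma exists_apply_flip1_add_one_eq (hF : IsGCFunction F) {γ β : V → Bool} (h : F β < F γ) :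
    ∃ u, γ u ≠ β u ∧ F (flip1 γ u) + 1 = F γ := by
  obtain ⟨u, -, hu, -, hFu, -⟩ := hF.2.2 γ β h
  exact ⟨u, hu, hFu⟩

end IsGCFunction

namespace TwoGapFree

variable {S : Finset ℕ} {x a b : ℕ}

lemma succ_mem (hS : TwoGapFree S) (hx : x ∉ S) (ha : a ∈ S) (hxa : x = a + 1 ∨ x + 1 = a)
    (hb : b ∈ S) (hxb : x < b) : x + 1 ∈ S := by
  by_cases hbelow : ∃ c ∈ S, c < x
  · exact (hS x hx hbelow ⟨b, hb, hxb⟩).1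
  · push Not at hbelow
    have := hbelow a ha
    rwa [show x + 1 = a by omega]

lemma pred_mem (hS : TwoGapFree S) (hx : x ∉ S) (ha : a ∈ S) (hxa : x = a + 1 ∨ x + 1 = a)
    (hb : b ∈ S) (hbx : b < x) : x - 1 ∈ S := by
  by_cases habove : ∃ c ∈ S, x < c
  · exact (hS x hx ⟨b, hb, hbx⟩ habove).2
  · push Not at habove
    have := habove a ha
    rwa [show x - 1 = a by omega]

end TwoGapFree

theorem gcFunction_twoGapFree_deltaMatroid_general {V : Type} [Fintype V] [DecidableEq V]
    (F : (V → Bool) → ℕ) (S : Finset ℕ)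
    (hF : IsGCFunction F) (hgap : TwoGapFree S)
    (hne : {α : V → Bool | F α ∈ S}.Nonempty) :
    IsDeltaMatroid {α : V → Bool | F α ∈ S} := by
  refine isDeltaMatroid_of_flip1 hne fun α hα β hβ v _ => ?_
  simp only [Set.mem_ofPred_eq] at hα hβ ⊢
  by_cases hflip : F (flip1 α v) ∈ S
  · exact Or.inl hflip
  right
  have hadj := hF.apply_flip1 α v
  rcases Nat.lt_or_gt_of_ne (ne_of_mem_of_not_mem hβ hflip) with hlt | hgt
  · obtain ⟨u, hu, hFu⟩ := hF.exists_apply_flip1_add_one_eq hlt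
    refine ⟨u, hu, ?_⟩
    rw [show F (flip1 (flip1 α v) u) = F (flip1 α v) - 1 by omega]
    exact hgap.pred_mem hflip hα hadj hβ hlt
  · obtain ⟨u, hu, hFu⟩ := hF.exists_apply_flip1_eq_succ hgt
    exact ⟨u, hu, hFu ▸ hgap.succ_mem hflip hα hadj hβ hgt⟩

/-- If `F` is a generalized counting function, `S ⊆ {0,…,|V|}` is 2-gap free, and
`M = {α : F α ∈ S}` is nonempty, then `M` is a Δ-matroid. -/
theorem gcFunction_twoGapFree_deltaMatroid {V : Type} [Fintype V] [DecidableEq V]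
    (F : (V → Bool) → ℕ) (S : Finset ℕ)
    (hF : IsGCFunction F) (hSsub : ∀ s ∈ S, s ≤ Fintype.card V) (hgap : TwoGapFree S)
    (hne : {α : V → Bool | F α ∈ S}.Nonempty) :
    IsDeltaMatroid {α : V → Bool | F α ∈ S} :=
  gcFunction_twoGapFree_deltaMatroid_general F S hF hgap hne
end

section
/- If M ⊆ {0,1}^V is a co-independent Δ-matroid on a nonempty finite set V, then |M| ≥ 2^{|V|−1}. -/
/-- A Δ-matroid `M` is co-independent if every tuple outside `M` becomes a member of `M`
after flipping any single coordinate. -/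
def CoIndependent {V : Type*} [DecidableEq V] (M : Set (V → Bool)) : Prop :=
  ∀ α, α ∉ M → ∀ u, flip1 α u ∈ M

/-! Flipping a fixed coordinate is an involution that, by co-independence, maps the complement
of `M` into `M`; hence `M` contains at least half of the `2 ^ |V|` tuples. -/

@[simp]
lemma flip1_flip1_self {V : Type*} [DecidableEq V] (α : V → Bool) (u : V) :
    flip1 (flip1 α u) u = α := by
  funext v
  by_cases hv : v = u <;> simp [flip1, flipS, hv]

lemma flip1_involutive {V : Type*} [DecidableEq V] (u : V) :
    Function.Involutive fun α : V → Bool => flip1 α u :=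
  fun α => flip1_flip1_self α u

lemma CoIndependent.ncard_compl_le {V : Type*} [Finite V] [DecidableEq V] [Nonempty V]
    {M : Set (V → Bool)} (hco : CoIndependent M) : Mᶜ.ncard ≤ M.ncard := by
  obtain ⟨u⟩ := ‹Nonempty V›
  exact Set.ncard_le_ncard_of_injOn (fun α => flip1 α u) (fun α hα => hco α hα u)
    (flip1_involutive u).injective.injOn

theorem coIndependent_card_ge_general {V : Type} [Fintype V] [DecidableEq V] [Nonempty V]
    (M : Set (V → Bool)) (hco : CoIndependent M) :
    2 ^ (Fintype.card V - 1) ≤ M.ncard := by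
  have hsplit : M.ncard + Mᶜ.ncard = 2 ^ Fintype.card V := by
    rw [Set.ncard_add_ncard_compl, Nat.card_eq_fintype_card, Fintype.card_fun, Fintype.card_bool]
  have hpow : 2 ^ Fintype.card V = 2 * 2 ^ (Fintype.card V - 1) := by
    rw [← pow_succ', Nat.sub_add_cancel Fintype.card_pos]
  have := hco.ncard_compl_le
  omega

/-- A co-independent Δ-matroid on a nonempty finite ground set `V` has at least
`2 ^ (|V| − 1)` tuples. -/
theorem coIndependent_card_ge {V : Type} [Fintype V] [DecidableEq V] [Nonempty V]
    (M : Set (V → Bool)) (hM : IsDeltaMatroid M) (hco : CoIndependent M) :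
    2 ^ (Fintype.card V - 1) ≤ M.ncard :=
  coIndependent_card_ge_general M hco
end

section
/- Let M ⊆ {0,1}^V be an interference-free Δ-matroid and let α, β ∈ M be such that |α △ β| is odd. Then there exists v ∈ α △ β such that α ⊕ v ∈ M. -/
/-- The interference Δ-matroid `{000, 110, 101, 011, 111}`. -/
def InterferenceM : Set (Fin 3 → Bool) :=
  {![false, false, false], ![true, true, false], ![true, false, true],
   ![false, true, true], ![true, true, true]}

/-- The minor of `M` obtained by fixing the variables in `D` to the values given by `ρ`
and deleting them.  (A sequence of single fix-and-delete operations amounts to one such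
simultaneous operation.) -/
def minorOf {V : Type*} [DecidableEq V] (M : Set (V → Bool)) (D : Finset V)
    (ρ : V → Bool) : Set ({x : V // x ∉ D} → Bool) :=
  {g | ∃ α ∈ M, (∀ x ∈ D, α x = ρ x) ∧ ∀ x : {x : V // x ∉ D}, g x = α x.val}

/-- `M` is interference-free: no minor of `M` is isomorphic to the interference
Δ-matroid, where isomorphism allows renaming the variables (the equivalence `e`) and
flipping the values `0` and `1` at some variables (the pattern `s`). -/
def InterferenceFree {V : Type*} [DecidableEq V] (M : Set (V → Bool)) : Prop :=
  ¬ ∃ (D : Finset V) (ρ : V → Bool) (e : Fin 3 ≃ {x : V // x ∉ D}) (s : Fin 3 → Bool),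
      minorOf M D ρ = {g | (fun i => xor (g (e i)) (s i)) ∈ InterferenceM}

/-! Write `β = α ⊕ T`. By the exchange axiom some `α ⊕ {u, v}` with `u, v ∈ T` lies in `M`; if
`u = v` we are done, otherwise induction from the new base point `α ⊕ {u, v}` gives `w ∈ T` with
`α ⊕ {u, v, w} ∈ M`, reducing everything to `|T| = 3`. There, if no `α ⊕ x` with `x ∈ T` were in
`M`, exchanging from `α ⊕ T` back to `α` would force every `α ⊕ (T ∖ {x})` into `M`; the tuples
`α ⊕ S`, `S ⊆ T`, in `M` would then be exactly those with `|S| ≠ 1`, so fixing the coordinates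
outside `T` to `α` yields the interference Δ-matroid as a minor. -/

section Flip

variable {V : Type*} [DecidableEq V]

theorem flipS_ne_iff (α : V → Bool) (S : Finset V) (x : V) : flipS α S x ≠ α x ↔ x ∈ S := by
  unfold flipS; split_ifs <;> simp [*]

theorem flipS_flipS (α : V → Bool) (S T : Finset V) :
    flipS (flipS α S) T = flipS α (symmDiff S T) := by
  funext x
  unfold flipS
  by_cases hS : x ∈ S <;> by_cases hT : x ∈ T <;> simp [hS, hT, Finset.mem_symmDiff]

theorem flipS_filter_ne {α β : V → Bool} {T : Finset V} (h : ∀ x ∉ T, β x = α x) :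
    flipS α (T.filter fun x => α x ≠ β x) = β := by
  funext x
  unfold flipS
  by_cases hx : x ∈ T
  · cases hα : α x <;> cases hβ : β x <;> simp [hx, hα, hβ]
  · simp [hx, h x hx]

end Flip

namespace IsDeltaMatroid

variable {V : Type*} [DecidableEq V] {M : Set (V → Bool)} {α : V → Bool} {T : Finset V}

theorem exists_flipS_pair_mem (hM : IsDeltaMatroid M) (hα : α ∈ M) (hT : flipS α T ∈ M)
    {v : V} (hv : v ∈ T) : ∃ u ∈ T, flipS α {u, v} ∈ M := by
  obtain ⟨u, hu, huM⟩ := hM.2 α hα _ hT v ((flipS_ne_iff α T v).2 hv).symm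
  exact ⟨u, (flipS_ne_iff α T u).1 hu.symm, huM⟩

theorem exists_flipS_sdiff_pair_mem (hM : IsDeltaMatroid M) (hα : α ∈ M) (hT : flipS α T ∈ M)
    {v : V} (hv : v ∈ T) : ∃ u ∈ T, flipS α (T \ {u, v}) ∈ M := by
  obtain ⟨u, hu, huM⟩ := hM.2 _ hT α hα v ((flipS_ne_iff α T v).2 hv)
  have huT : u ∈ T := (flipS_ne_iff α T u).1 hu
  have hsub : ({u, v} : Finset V) ≤ T := Finset.insert_subset huT (Finset.singleton_subset_iff.2 hv)
  rw [flipS_flipS, symmDiff_of_ge hsub] at huM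
  exact ⟨u, huT, huM⟩

theorem flipS_erase_mem (hM : IsDeltaMatroid M) (hα : α ∈ M) (hT : flipS α T ∈ M)
    (hT3 : T.card = 3) (hsingle : ∀ y ∈ T, flipS α {y} ∉ M) {v : V} (hv : v ∈ T) :
    flipS α (T.erase v) ∈ M := by
  obtain ⟨u, hu, huM⟩ := hM.exists_flipS_sdiff_pair_mem hα hT hv
  by_cases huv : u = v
  · subst huv
    simpa [Finset.sdiff_singleton_eq_erase] using huM
  · have hcard : (T \ {u, v}).card = 1 := by
      rw [Finset.card_sdiff_of_subset (Finset.insert_subset hu (Finset.singleton_subset_iff.2 hv)),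
        Finset.card_pair huv, hT3]
    obtain ⟨z, hz⟩ := Finset.card_eq_one.1 hcard
    have hzT : z ∈ T := Finset.sdiff_subset (hz ▸ Finset.mem_singleton_self z)
    exact absurd (hz ▸ huM) (hsingle z hzT)

theorem flipS_mem_iff_card_ne_one (hM : IsDeltaMatroid M) (hα : α ∈ M) (hT : flipS α T ∈ M)
    (hT3 : T.card = 3) (hsingle : ∀ y ∈ T, flipS α {y} ∉ M) {S : Finset V} (hS : S ⊆ T) :
    flipS α S ∈ M ↔ S.card ≠ 1 := by
  have hle : S.card ≤ 3 := hT3 ▸ Finset.card_le_card hS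
  interval_cases h : S.card
  · have : flipS α ∅ = α := by funext x; simp [flipS]
    simpa [Finset.card_eq_zero.1 h, this] using hα
  · obtain ⟨z, rfl⟩ := Finset.card_eq_one.1 h
    simpa using hsingle z (hS (Finset.mem_singleton_self z))
  · obtain ⟨z, hzT, hzS⟩ := Finset.exists_mem_notMem_of_card_lt_card (s := S) (t := T) (by omega)
    have : S = T.erase z := Finset.eq_of_subset_of_card_le
      (fun x hx => Finset.mem_erase.2 ⟨fun h => hzS (h ▸ hx), hS hx⟩)
      (by rw [Finset.card_erase_of_mem hzT]; omega)
    simpa [this] using hM.flipS_erase_mem hα hT hT3 hsingle hzT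
  · simpa [Finset.eq_of_subset_of_card_le hS (by omega)] using hT

end IsDeltaMatroid

section Interference

variable {V : Type*} [DecidableEq V]

def minorExtend (D : Finset V) (ρ : V → Bool) (g : {x : V // x ∉ D} → Bool) : V → Bool :=
  fun x => if h : x ∈ D then ρ x else g ⟨x, h⟩

theorem mem_minorOf_iff {M : Set (V → Bool)} {D : Finset V} {ρ : V → Bool}
    {g : {x : V // x ∉ D} → Bool} : g ∈ minorOf M D ρ ↔ minorExtend D ρ g ∈ M := by
  constructor
  · rintro ⟨β, hβ, hD, hg⟩
    convert hβ using 1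
    funext x
    unfold minorExtend
    split_ifs with hx
    · exact (hD x hx).symm
    · exact hg ⟨x, hx⟩
  · intro h
    exact ⟨_, h, fun x hx => dif_pos hx, fun x => (dif_neg x.2 : minorExtend D ρ g x = g x).symm⟩

theorem mem_interferenceM_iff (p : Fin 3 → Bool) :
    p ∈ InterferenceM ↔ (Finset.univ.filter fun i => p i = true).card ≠ 1 := by
  simp only [InterferenceM, Set.mem_insert_iff, Set.mem_singleton_iff]
  revert p
  decide

theorem not_interferenceFree_of_flipS_mem_iff [Fintype V] {M : Set (V → Bool)} (α : V → Bool)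
    {T : Finset V} (hT3 : T.card = 3) (h : ∀ S ⊆ T, flipS α S ∈ M ↔ S.card ≠ 1) :
    ¬ InterferenceFree M := by
  have hcard : Fintype.card {x : V // x ∉ Tᶜ} = 3 := by
    simpa [Fintype.card_subtype] using hT3
  -- any numbering of `T` will do, since `InterferenceM` is symmetric in its coordinates
  set e : Fin 3 ≃ {x : V // x ∉ Tᶜ} := (Fintype.equivFinOfCardEq hcard).symm
  refine not_not.2 ⟨Tᶜ, α, e, fun i => α (e i), ?_⟩
  ext g
  set β := minorExtend Tᶜ α g
  have hβ : ∀ x ∉ T, β x = α x := fun x hx => dif_pos (Finset.mem_compl.2 hx)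
  have hcard_eq : (T.filter fun x => α x ≠ β x).card =
      (Finset.univ.filter fun i => xor (g (e i)) (α (e i)) = true).card := by
    have hdiff : ∀ i, xor (g (e i)) (α (e i)) = true ↔ α (e i) ≠ β (e i) := fun i => by
      rw [show β (e i) = g (e i) from dif_neg (e i).2]
      cases g (e i) <;> cases α (e i) <;> decide
    symm
    refine Finset.card_bij (fun i _ => (e i).1) (fun i hi => ?_) (fun i _ j _ hij => ?_)
      (fun x hx => ?_)
    · exact Finset.mem_filter.2 ⟨by simpa using (e i).2, (hdiff i).1 (Finset.mem_filter.1 hi).2⟩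
    · exact e.injective (Subtype.ext hij)
    · obtain ⟨hxT, hx⟩ := Finset.mem_filter.1 hx
      refine ⟨e.symm ⟨x, by simpa using hxT⟩, ?_, by simp⟩
      simpa [hdiff] using hx
  rw [Set.mem_ofPred_eq, mem_interferenceM_iff, mem_minorOf_iff, ← hcard_eq,
    ← h _ (Finset.filter_subset _ T), flipS_filter_ne hβ]

end Interference

namespace InterferenceFree

variable {V : Type*} [Fintype V] [DecidableEq V] {M : Set (V → Bool)} {α : V → Bool}

theorem exists_flipS_singleton_mem_of_card_eq_three (hIF : InterferenceFree M)
    (hM : IsDeltaMatroid M) (hα : α ∈ M) {T : Finset V} (hT : flipS α T ∈ M) (hT3 : T.card = 3) :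
    ∃ v ∈ T, flipS α {v} ∈ M := by
  by_contra! hsingle
  exact not_interferenceFree_of_flipS_mem_iff α hT3
    (fun _ hS => hM.flipS_mem_iff_card_ne_one hα hT hT3 hsingle hS) hIF

theorem exists_flipS_singleton_mem_of_odd (hIF : InterferenceFree M) (hM : IsDeltaMatroid M)
    (T : Finset V) {α : V → Bool} (hα : α ∈ M) (hT : flipS α T ∈ M) (hodd : Odd T.card) :
    ∃ v ∈ T, flipS α {v} ∈ M := by
  induction T using Finset.strongInduction generalizing α with
  | H T ih =>
  obtain ⟨v, hv⟩ := Finset.card_pos.1 hodd.pos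
  obtain ⟨u, hu, huv⟩ := hM.exists_flipS_pair_mem hα hT hv
  by_cases hvu : u = v
  · subst hvu
    exact ⟨u, hu, by simpa using huv⟩
  have hsub : ({u, v} : Finset V) ⊆ T := Finset.insert_subset hu (Finset.singleton_subset_iff.2 hv)
  have hrest : flipS (flipS α {u, v}) (T \ {u, v}) = flipS α T := by
    rw [flipS_flipS, Disjoint.symmDiff_eq_sup disjoint_sdiff_self_right, Finset.sup_eq_union,
      Finset.union_sdiff_of_subset hsub]
  have hodd_rest : Odd (T \ {u, v}).card := by
    rw [Finset.card_sdiff_of_subset hsub]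
    exact Nat.Odd.sub_even (Finset.card_le_card hsub) hodd (by simp [Finset.card_pair hvu])
  obtain ⟨w, hw, hwM⟩ := ih _ (Finset.sdiff_ssubset hsub (by simp)) huv (hrest ▸ hT) hodd_rest
  have hdisj : Disjoint ({u, v} : Finset V) {w} := by
    simpa using (Finset.mem_sdiff.1 hw).2
  rw [flipS_flipS, hdisj.symmDiff_eq_sup, Finset.sup_eq_union] at hwM
  obtain ⟨z, hz, hzM⟩ := hIF.exists_flipS_singleton_mem_of_card_eq_three hM hα hwM
    (by rw [Finset.card_union_of_disjoint hdisj, Finset.card_pair hvu, Finset.card_singleton])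
  exact ⟨z, Finset.union_subset hsub (Finset.singleton_subset_iff.2 (Finset.mem_sdiff.1 hw).1) hz,
    hzM⟩

end InterferenceFree

/-- If `M` is an interference-free Δ-matroid and `α, β ∈ M` differ in an odd number of
coordinates, then there is `v ∈ α △ β` with `α ⊕ v ∈ M`. -/
theorem interferenceFree_odd_flip {V : Type} [Fintype V] [DecidableEq V]
    (M : Set (V → Bool)) (hM : IsDeltaMatroid M) (hIF : InterferenceFree M)
    (α β : V → Bool) (hα : α ∈ M) (hβ : β ∈ M)
    (hodd : (Finset.univ.filter fun v => α v ≠ β v).card % 2 = 1) :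
    ∃ v, α v ≠ β v ∧ flip1 α v ∈ M := by
  have hβ_flip : flipS α (Finset.univ.filter fun v => α v ≠ β v) = β :=
    flipS_filter_ne (by simp)
  obtain ⟨v, hv, hvM⟩ := hIF.exists_flipS_singleton_mem_of_odd hM _ hα (by rwa [hβ_flip])
    (Nat.odd_iff.2 hodd)
  exact ⟨v, (Finset.mem_filter.1 hv).2, hvM⟩
end
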